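/- arXiv:1108.5664 — 7 statements merged into one kernel-verified Lean document; each statement's English description precedes it below -/
import Mathlib

section
/- Let m ≥ 2 be an integer. Let (p_k) be a sequence of primes satisfying (1+δ)p_k ≤ p_{k+1} ≤ C p_k for all k, for some δ > 0 and C < ∞, and let (a_k) be positive integers with a_k ≤ C p_k^m and a_{k+1} > a_k + p_k^m. Let S_k = { a_k + Σ_{r=1}^m p_k^{r−1}·[j^r]_{p_k} : 0 ≤ j < p_k }, let S = ∪_k S_k, and let (n_ν : ν ∈ ℕ) enumerate S in increasing order. Then n_ν ≍ ν^m: there exist constants 0 < c ≤ C' < ∞ such that c·ν^m ≤ n_ν ≤ C'·ν^m for all ν ∈ ℕ. -/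
/-!
The `k`-th block `S k` has exactly `p k` elements, all in `[a k, a k + (p k)^m)`, because
`j ↦ a k + ∑ p^r [j^(r+1)]_p` is an `m`-digit base-`p` numeral with least digit `j`; and the
blocks come in increasing order. So if `n ν` lies in block `k`, then `ν` is squeezed between the size
`p (k-1)` of the previous block and the total size `p 0 + ⋯ + p k ≤ (1 + δ)/δ · p k` of the
blocks so far. Hence `ν + 1 ≍ p k`, while `n ν ≍ (p k)^m`: from above by `a k ≤ C (p k)^m`,
from below by `a k > (p (k-1))^m ≥ (p k / C)^m`.
-/

open Finset

def powerResidueSum (p m j : ℕ) : ℕ := ∑ r ∈ range m, p ^ r * (j ^ (r + 1) % p)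

theorem sum_range_pow_mul_lt_pow {p : ℕ} {d : ℕ → ℕ} (hd : ∀ r, d r < p) (m : ℕ) :
    ∑ r ∈ range m, p ^ r * d r < p ^ m := by
  induction m with
  | zero => simp
  | succ m ih =>
    calc ∑ r ∈ range (m + 1), p ^ r * d r < p ^ m + p ^ m * d m := by
          rw [sum_range_succ]; exact Nat.add_lt_add_right ih _
      _ = p ^ m * (d m + 1) := by ring
      _ ≤ p ^ (m + 1) := by rw [pow_succ]; exact Nat.mul_le_mul_left _ (hd m)

theorem powerResidueSum_lt {p m : ℕ} (hp : 0 < p) (j : ℕ) : powerResidueSum p m j < p ^ m :=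
  sum_range_pow_mul_lt_pow (fun _ => Nat.mod_lt _ hp) m

theorem powerResidueSum_mod {p m j : ℕ} (hm : 0 < m) (hj : j < p) :
    powerResidueSum p m j % p = j := by
  obtain ⟨m, rfl⟩ := Nat.exists_eq_add_one_of_ne_zero hm.ne'
  have hshift : ∑ r ∈ range m, p ^ (r + 1) * (j ^ (r + 1 + 1) % p) =
      p * ∑ r ∈ range m, p ^ r * (j ^ (r + 2) % p) := by
    rw [mul_sum]; exact sum_congr rfl fun r _ => by ring
  rw [powerResidueSum, sum_range_succ', hshift, Nat.mul_add_mod]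
  simp [Nat.mod_eq_of_lt hj]

def residueBlock (a p m : ℕ) : Finset ℕ := (range p).image fun j => a + powerResidueSum p m j

theorem card_residueBlock_le (a p m : ℕ) : (residueBlock a p m).card ≤ p :=
  card_image_le.trans (card_range p).le

theorem card_residueBlock {m : ℕ} (hm : 0 < m) (a p : ℕ) : (residueBlock a p m).card = p := by
  rw [residueBlock, card_image_of_injOn, card_range]
  intro i hi j hj hij
  rw [coe_range, Set.mem_Iio] at hi hj
  rw [← powerResidueSum_mod hm hi, ← powerResidueSum_mod hm hj, Nat.add_left_cancel hij]

theorem residueBlock_subset_Ico (a p m : ℕ) : residueBlock a p m ⊆ Ico a (a + p ^ m) := by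
  intro x hx
  obtain ⟨j, hj, rfl⟩ := mem_image.1 hx
  have := powerResidueSum_lt (m := m) (Nat.zero_lt_of_lt (mem_range.1 hj)) j
  rw [mem_Ico]
  omega

theorem coe_residueBlock (a p m : ℕ) :
    (residueBlock a p m : Set ℕ) = (fun j => a + powerResidueSum p m j) '' {j | j < p} := by
  simp [residueBlock, Set.Iio]

theorem StrictMono.card_le_of_forall_lt {β : Type*} [LinearOrder β] {n : ℕ → β}
    (hn : StrictMono n) {s : Finset β} {ν : ℕ} (hs : ∀ x ∈ s, x ∈ Set.range n ∧ x < n ν) :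
    s.card ≤ ν := by
  classical
  calc s.card ≤ ((range ν).image n).card := card_le_card fun x hx => by
        obtain ⟨⟨i, rfl⟩, hi⟩ := hs x hx
        exact mem_image_of_mem n (mem_range.2 (hn.lt_iff_lt.1 hi))
    _ ≤ ν := card_image_le.trans (card_range ν).le

theorem mul_sum_range_succ_le_of_lacunary {x : ℕ → ℝ} {δ : ℝ} (hx : 0 ≤ x 0)
    (hlac : ∀ k, (1 + δ) * x k ≤ x (k + 1)) (k : ℕ) :
    δ * ∑ i ∈ range (k + 1), x i ≤ (1 + δ) * x k := by
  induction k with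
  | zero => simp only [zero_add, sum_range_one]; linarith
  | succ k ih => rw [sum_range_succ, mul_add]; linarith [hlac k]

section Blocks

variable {m : ℕ} {δ C : ℝ} {a p n : ℕ → ℕ} {k ν : ℕ}

theorem residueBlock_lt_residueBlock (hagap : ∀ k, a k + p k ^ m < a (k + 1)) {k l x y : ℕ}
    (hkl : k < l) (hx : x ∈ residueBlock (a k) (p k) m) (hy : y ∈ residueBlock (a l) (p l) m) :
    x < y := by
  have ha : StrictMono a :=
    strictMono_nat_of_lt_succ fun k => (Nat.le_add_right _ _).trans_lt (hagap k)
  have hx' := mem_Ico.1 (residueBlock_subset_Ico _ _ _ hx)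
  have hy' := mem_Ico.1 (residueBlock_subset_Ico _ _ _ hy)
  have : a (k + 1) ≤ a l := ha.monotone hkl
  have := hagap k
  omega

theorem succ_le_sum_of_mem_residueBlock (hagap : ∀ k, a k + p k ^ m < a (k + 1))
    (hn : StrictMono n) (hrange : Set.range n = ⋃ k, (residueBlock (a k) (p k) m : Set ℕ))
    (hν : n ν ∈ residueBlock (a k) (p k) m) : ν + 1 ≤ ∑ i ∈ range (k + 1), p i := by
  classical
  have hcover :
      ∀ i < ν + 1, n i ∈ (range (k + 1)).biUnion fun l => residueBlock (a l) (p l) m := by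
    intro i hi
    obtain ⟨l, hl⟩ := Set.mem_iUnion.1 (hrange ▸ Set.mem_range_self i)
    refine mem_biUnion.2 ⟨l, mem_range.2 (Nat.lt_succ_of_le ?_), hl⟩
    by_contra! hkl
    exact (hn.monotone (Nat.le_of_lt_succ hi)).not_gt
      (residueBlock_lt_residueBlock hagap hkl hν hl)
  calc ν + 1 ≤ _ := le_card_of_inj_on_range n hcover fun i _ j _ h => hn.injective h
    _ ≤ ∑ l ∈ range (k + 1), (residueBlock (a l) (p l) m).card := card_biUnion_le
    _ ≤ _ := sum_le_sum fun l _ => card_residueBlock_le _ _ _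

theorem le_index_of_mem_residueBlock_succ (hm : 0 < m) (hagap : ∀ k, a k + p k ^ m < a (k + 1))
    (hn : StrictMono n) (hrange : Set.range n = ⋃ k, (residueBlock (a k) (p k) m : Set ℕ))
    (hν : n ν ∈ residueBlock (a (k + 1)) (p (k + 1)) m) : p k ≤ ν := by
  rw [← card_residueBlock hm (a k) (p k)]
  refine hn.card_le_of_forall_lt fun x hx =>
    ⟨?_, residueBlock_lt_residueBlock hagap (Nat.lt_succ_self k) hx hν⟩
  rw [hrange]
  exact Set.mem_iUnion.2 ⟨k, hx⟩

theorem mul_index_succ_le_of_mem_residueBlock (hδ : 0 ≤ δ)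
    (hlac : ∀ k, (1 + δ) * (p k : ℝ) ≤ (p (k + 1) : ℝ)) (hagap : ∀ k, a k + p k ^ m < a (k + 1))
    (hn : StrictMono n) (hrange : Set.range n = ⋃ k, (residueBlock (a k) (p k) m : Set ℕ))
    (hν : n ν ∈ residueBlock (a k) (p k) m) : δ * (ν + 1) ≤ (1 + δ) * p k := by
  have hcount : ((ν + 1 : ℕ) : ℝ) ≤ ((∑ i ∈ range (k + 1), p i : ℕ) : ℝ) :=
    Nat.cast_le.2 (succ_le_sum_of_mem_residueBlock hagap hn hrange hν)
  push_cast at hcount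
  calc δ * (ν + 1) ≤ δ * ∑ i ∈ range (k + 1), (p i : ℝ) := mul_le_mul_of_nonneg_left hcount hδ
    _ ≤ (1 + δ) * p k :=
      mul_sum_range_succ_le_of_lacunary (x := fun i => (p i : ℝ)) (Nat.cast_nonneg _) hlac k

theorem le_mul_index_succ_of_mem_residueBlock (hm : 0 < m) (hC : 1 ≤ C)
    (hp0 : 1 ≤ (p 0 : ℝ)) (hup : ∀ k, (p (k + 1) : ℝ) ≤ C * (p k : ℝ))
    (hagap : ∀ k, a k + p k ^ m < a (k + 1))
    (hn : StrictMono n) (hrange : Set.range n = ⋃ k, (residueBlock (a k) (p k) m : Set ℕ))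
    (hν : n ν ∈ residueBlock (a k) (p k) m) : (p k : ℝ) ≤ C * p 0 * (ν + 1) := by
  have hν1 : (1 : ℝ) ≤ ν + 1 := by simp
  cases k with
  | zero =>
    calc (p 0 : ℝ) = 1 * p 0 * 1 := by ring
      _ ≤ C * p 0 * (ν + 1) := by gcongr
  | succ k =>
    have hk : (p k : ℝ) ≤ ν := by
      exact_mod_cast le_index_of_mem_residueBlock_succ hm hagap hn hrange hν
    calc (p (k + 1) : ℝ) ≤ C * p k := hup k
      _ ≤ C * (1 * (ν + 1)) := by gcongr; linarith
      _ ≤ C * (p 0 * (ν + 1)) := by gcongr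
      _ = C * p 0 * (ν + 1) := by ring

theorem pow_le_mul_of_mem_residueBlock (hC : 1 ≤ C) (hp0 : 1 ≤ (p 0 : ℝ))
    (hapos : ∀ k, 0 < a k) (hup : ∀ k, (p (k + 1) : ℝ) ≤ C * (p k : ℝ))
    (hagap : ∀ k, a k + p k ^ m < a (k + 1))
    (hν : n ν ∈ residueBlock (a k) (p k) m) : (p k : ℝ) ^ m ≤ (C * p 0) ^ m * n ν := by
  have hak := (mem_Ico.1 (residueBlock_subset_Ico _ _ _ hν)).1
  cases k with
  | zero =>
    have : (1 : ℝ) ≤ n ν := by exact_mod_cast (hapos 0).trans_le hak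
    calc (p 0 : ℝ) ^ m ≤ (C * p 0) ^ m := by gcongr; exact le_mul_of_one_le_left (by linarith) hC
      _ ≤ (C * p 0) ^ m * n ν := le_mul_of_one_le_right (by positivity) this
  | succ k =>
    have : ((p k ^ m : ℕ) : ℝ) ≤ n ν := by exact_mod_cast (by have := hagap k; omega)
    push_cast at this
    calc (p (k + 1) : ℝ) ^ m ≤ (C * p k) ^ m := by gcongr; exact hup k
      _ = C ^ m * p k ^ m := mul_pow _ _ _
      _ ≤ (C * p 0) ^ m * n ν := by gcongr; exact le_mul_of_one_le_right (by linarith) hp0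

theorem le_mul_pow_of_mem_residueBlock (hasize : ∀ k, (a k : ℝ) ≤ C * (p k : ℝ) ^ m)
    (hν : n ν ∈ residueBlock (a k) (p k) m) : (n ν : ℝ) ≤ (C + 1) * p k ^ m := by
  have : ((n ν : ℕ) : ℝ) ≤ ((a k + p k ^ m : ℕ) : ℝ) :=
    Nat.cast_le.2 (mem_Ico.1 (residueBlock_subset_Ico _ _ _ hν)).2.le
  push_cast at this
  linarith [hasize k]

end Blocks

/-- **Theorem (growth of the sparse sequence).**
With the same construction as in the main theorem (sequences `p`, `a`, the sets `S k`,
and `(n ν)` the increasing enumeration of `S = ⋃ k, S k`, here 0-indexed so that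
`n ν` corresponds to the `(ν+1)`-st element of the paper), one has `n_ν ≍ ν^m`:
there exist constants `0 < c ≤ C' < ∞` with `c * ν^m ≤ n_ν ≤ C' * ν^m` for all `ν ≥ 1`. -/
theorem sparse_power_sequence_growth
    (m : ℕ) (hm : 2 ≤ m) (δ C : ℝ) (hδ : 0 < δ)
    (p a : ℕ → ℕ) (hp : ∀ k, (p k).Prime)
    (hlac : ∀ k, (1 + δ) * (p k : ℝ) ≤ (p (k + 1) : ℝ))
    (hup : ∀ k, (p (k + 1) : ℝ) ≤ C * (p k : ℝ))
    (hapos : ∀ k, 0 < a k)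
    (hasize : ∀ k, (a k : ℝ) ≤ C * (p k : ℝ) ^ m)
    (hagap : ∀ k, a k + (p k) ^ m < a (k + 1))
    (n : ℕ → ℕ) (hmono : StrictMono n)
    (hrange : Set.range n =
      ⋃ k, (fun j : ℕ => a k + ∑ r ∈ Finset.range m, (p k) ^ r * (j ^ (r + 1) % p k)) ''
        {j : ℕ | j < p k}) :
    ∃ c C' : ℝ, 0 < c ∧ c ≤ C' ∧ ∀ ν : ℕ,
      c * ((ν : ℝ) + 1) ^ m ≤ (n ν : ℝ) ∧ (n ν : ℝ) ≤ C' * ((ν : ℝ) + 1) ^ m := by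
  have hrange' : Set.range n = ⋃ k, (residueBlock (a k) (p k) m : Set ℕ) := by
    simp only [hrange, coe_residueBlock]
    rfl
  have hp0 : (1 : ℝ) ≤ p 0 := by exact_mod_cast (hp 0).one_lt.le
  have hC : 1 + δ ≤ C := le_of_mul_le_mul_right ((hlac 0).trans (hup 0)) (by linarith)
  have hC1 : 1 ≤ C := by linarith
  have hbounds : ∀ ν : ℕ, (δ / ((1 + δ) * (C * p 0))) ^ m * ((ν : ℝ) + 1) ^ m ≤ n ν ∧
      (n ν : ℝ) ≤ (C + 1) * (C * p 0) ^ m * ((ν : ℝ) + 1) ^ m := by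
    intro ν
    obtain ⟨k, hk⟩ : ∃ k, n ν ∈ residueBlock (a k) (p k) m :=
      Set.mem_iUnion.1 (hrange' ▸ Set.mem_range_self ν)
    have hνk := mul_index_succ_le_of_mem_residueBlock hδ.le hlac hagap hmono hrange' hk
    have hkν := le_mul_index_succ_of_mem_residueBlock (by omega) hC1 hp0 hup hagap hmono
      hrange' hk
    constructor
    · calc _ = (δ * (ν + 1) / (1 + δ)) ^ m / (C * p 0) ^ m := by
            rw [← mul_pow, ← div_pow, div_mul_eq_mul_div, div_div]
        _ ≤ (p k) ^ m / (C * p 0) ^ m := by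
          gcongr
          rw [div_le_iff₀ (by positivity)]
          linarith
        _ ≤ n ν := (div_le_iff₀' (by positivity)).2
          (pow_le_mul_of_mem_residueBlock hC1 hp0 hapos hup hagap hk)
    · calc (n ν : ℝ) ≤ (C + 1) * p k ^ m := le_mul_pow_of_mem_residueBlock hasize hk
        _ ≤ (C + 1) * (C * p 0 * (ν + 1)) ^ m := by gcongr
        _ = (C + 1) * (C * p 0) ^ m * ((ν : ℝ) + 1) ^ m := by rw [mul_pow]; ring
  refine ⟨_, _, by positivity, ?_, hbounds⟩
  simpa using (hbounds 0).1.trans (hbounds 0).2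
end

section
/- Let G be a countable discrete group equipped with counting measure, let γ > 0, and let μ_k, ν_k : G → ℂ (k ∈ ℕ) be finitely supported functions. Assume: (i) the maximal operator f ↦ sup_k (|f| * |ν_k|) is of weak type (1,1) on G; (ii) there is C < ∞ with |support(μ_k)| ≤ C·2^{kγ} for all k; (iii) there is C < ∞ with ‖f * (μ_k − ν_k)‖_{ℓ²} ≤ C·2^{−kγ/2} ‖f‖_{ℓ²} for all f ∈ ℓ²(G) and all k. Then the maximal operator f ↦ sup_{k∈ℕ} |f * μ_k| is of weak type (1,1) on G. -/
/-!
Fix `α > 0`, put `p = 2 ^ γ` and truncate `f` at the heights `α p ^ k`. At scale `k` the part of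
`f` above height `α p ^ k` only affects `f * μ k` on the translates `z · supp μ k` of the points
with `α p ^ k < |f z|`; by (ii) these have total size `≲ ∑_z ∑_{α p^k < |f z|} p ^ k ≲ ‖f‖₁ / α`.
Off this exceptional set, `f * μ k = f_k * ν k + f_k * (μ k - ν k)` for the truncation `f_k`.
The first term is dominated by `|f| * |ν k|` and is handled by (i). The second is handled by
Chebyshev's inequality in `ℓ²`, summed over `k`: by (iii) it suffices that
`∑_k p ^ (-k) ‖f_k‖₂² ≲ α ‖f‖₁`, which holds because `∑_{k : |f z| ≤ α p^k} p ^ (-k) ≲ α / |f z|`.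
-/

open Finset Function

lemma sum_pow_le_of_forall_pow_le {p t : ℝ} (hp : 1 < p) (ht : 0 ≤ t) (K : Finset ℕ)
    (hK : ∀ k ∈ K, p ^ k ≤ t) : ∑ k ∈ K, p ^ k ≤ p / (p - 1) * t := by
  rcases K.eq_empty_or_nonempty with rfl | hne
  · simp only [sum_empty]
    exact mul_nonneg (div_nonneg (by linarith) (by linarith)) ht
  have hp1 : 0 < p - 1 := by linarith
  set m := K.max' hne
  calc ∑ k ∈ K, p ^ k ≤ ∑ k ∈ range (m + 1), p ^ k :=
        sum_le_sum_of_subset_of_nonneg (fun k hk => mem_range_succ_iff.2 (K.le_max' k hk))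
          (fun _ _ _ => by positivity)
    _ = (p ^ (m + 1) - 1) / (p - 1) := geom_sum_eq hp.ne' _
    _ ≤ p ^ (m + 1) / (p - 1) := by gcongr; linarith
    _ = p / (p - 1) * p ^ m := by rw [pow_succ]; ring
    _ ≤ p / (p - 1) * t := by gcongr; exact hK m (K.max'_mem hne)

lemma sum_inv_pow_le_of_forall_le_pow {p t : ℝ} (hp : 1 < p) (ht : 0 < t) (K : Finset ℕ)
    (hK : ∀ k ∈ K, t ≤ p ^ k) : ∑ k ∈ K, (p ^ k)⁻¹ ≤ p / (p - 1) * t⁻¹ := by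
  rcases K.eq_empty_or_nonempty with rfl | hne
  · simp only [sum_empty]
    exact mul_nonneg (div_nonneg (by linarith) (by linarith)) (inv_nonneg.2 ht.le)
  have hq0 : 0 ≤ p⁻¹ := inv_nonneg.2 (by linarith)
  have hq1 : p⁻¹ < 1 := inv_lt_one_of_one_lt₀ hp
  set m := K.min' hne
  simp_rw [← inv_pow]
  calc ∑ k ∈ K, p⁻¹ ^ k ≤ ∑ k ∈ Ico m (K.max' hne + 1), p⁻¹ ^ k :=
        sum_le_sum_of_subset_of_nonneg
          (fun k hk => mem_Ico.2 ⟨K.min'_le k hk, Nat.lt_succ_of_le (K.le_max' k hk)⟩)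
          (fun _ _ _ => by positivity)
    _ ≤ p⁻¹ ^ m / (1 - p⁻¹) := geom_sum_Ico_le_of_lt_one hq0 hq1
    _ = p / (p - 1) * (p ^ m)⁻¹ := by
        rw [inv_pow]; field_simp
    _ ≤ p / (p - 1) * t⁻¹ := by
        have hp1 : 0 < p - 1 := by linarith
        gcongr; exact hK m (K.min'_mem hne)

lemma Summable.finite_setOf_lt {X : Type*} {u : X → ℝ} (hu : Summable u) {ε : ℝ} (hε : 0 < ε) :
    {x | ε < u x}.Finite :=
  (Filter.eventually_cofinite.1 (hu.tendsto_cofinite_zero.eventually_lt_const hε)).subset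
    fun _ hx => not_lt.2 (le_of_lt hx)

lemma finite_setOf_mul_pow_lt {p a : ℝ} (hp : 1 < p) (ha : 0 < a) (r : ℝ) :
    {k : ℕ | a * p ^ k < r}.Finite := by
  have h := (tendsto_pow_atTop_atTop_of_one_lt hp).eventually_ge_atTop (r / a)
  rw [← Nat.cofinite_eq_atTop] at h
  exact (Filter.eventually_cofinite.1 h).subset fun k (hk : a * p ^ k < r) =>
    not_le.2 ((lt_div_iff₀' ha).2 hk)

lemma Set.finite_and_ncard_le_of_forall_finset_card_le {α : Type*} {s : Set α} {c : ℝ}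
    (h : ∀ t : Finset α, ↑t ⊆ s → (t.card : ℝ) ≤ c) : s.Finite ∧ (s.ncard : ℝ) ≤ c := by
  have hs : s.Finite := by
    by_contra hinf
    obtain ⟨t, hts, hcard⟩ := Set.Infinite.exists_subset_card_eq hinf (⌈c⌉₊ + 1)
    have := h t hts
    rw [hcard] at this
    push_cast at this
    linarith [Nat.le_ceil c]
  refine ⟨hs, ?_⟩
  rw [Set.ncard_eq_toFinset_card s hs]
  exact h _ (by simp)

lemma Set.finite_and_ncard_le_of_subset_union {α : Type*} {s t u : Set α} {a b : ℝ}
    (hs : s ⊆ t ∪ u) (ht : t.Finite ∧ (t.ncard : ℝ) ≤ a) (hu : u.Finite ∧ (u.ncard : ℝ) ≤ b) :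
    s.Finite ∧ (s.ncard : ℝ) ≤ a + b := by
  have htu : (t ∪ u).Finite := ht.1.union hu.1
  refine ⟨htu.subset hs, ?_⟩
  calc (s.ncard : ℝ) ≤ ((t ∪ u).ncard : ℝ) := by exact_mod_cast Set.ncard_le_ncard hs htu
    _ ≤ t.ncard + u.ncard := by exact_mod_cast Set.ncard_union_le t u
    _ ≤ a + b := add_le_add ht.2 hu.2

lemma Set.exists_finite_toFinset_card_le_iff {α : Type*} {s : Set α} {c : ℝ} :
    (∃ hs : s.Finite, (hs.toFinset.card : ℝ) ≤ c) ↔ s.Finite ∧ (s.ncard : ℝ) ≤ c :=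
  ⟨fun ⟨hs, h⟩ => ⟨hs, by rwa [Set.ncard_eq_toFinset_card s hs]⟩,
    fun ⟨hs, h⟩ => ⟨hs, by rwa [← Set.ncard_eq_toFinset_card s hs]⟩⟩

lemma finite_and_ncard_exists_lt_norm_le {ι α E : Type*} [SeminormedAddGroup E] (h : ι → α → E)
    {β M : ℝ} (hβ : 0 < β) (hsum : ∀ i, Summable fun x => ‖h i x‖ ^ 2)
    (hM : ∀ I : Finset ι, ∑ i ∈ I, ∑' x, ‖h i x‖ ^ 2 ≤ M) :
    {x | ∃ i, β < ‖h i x‖}.Finite ∧ ({x | ∃ i, β < ‖h i x‖}.ncard : ℝ) ≤ M / β ^ 2 := by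
  classical
  refine Set.finite_and_ncard_le_of_forall_finset_card_le fun F hF => ?_
  obtain ⟨I, hI⟩ : ∃ I : Finset ι, ∀ x ∈ F, ∃ i ∈ I, β < ‖h i x‖ := by
    choose κ hκ using fun x : F => hF x.2
    exact ⟨univ.image κ, fun x hx => ⟨κ ⟨x, hx⟩, mem_image_of_mem _ (mem_univ _), hκ _⟩⟩
  rw [le_div_iff₀ (by positivity)]
  calc (F.card : ℝ) * β ^ 2 = ∑ x ∈ F, β ^ 2 := by rw [sum_const, nsmul_eq_mul]
    _ ≤ ∑ x ∈ F, ∑ i ∈ I, ‖h i x‖ ^ 2 := sum_le_sum fun x hx => by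
        obtain ⟨i, hi, hβi⟩ := hI x hx
        exact (pow_le_pow_left₀ hβ.le hβi.le 2).trans
          (single_le_sum (f := fun i => ‖h i x‖ ^ 2) (fun i _ => by positivity) hi)
    _ = ∑ i ∈ I, ∑ x ∈ F, ‖h i x‖ ^ 2 := sum_comm
    _ ≤ ∑ i ∈ I, ∑' x, ‖h i x‖ ^ 2 :=
        sum_le_sum fun i _ => (hsum i).sum_le_tsum _ fun _ _ => by positivity
    _ ≤ M := hM I

section Convolution

variable {G 𝕜 : Type*} [Group G] [NormedField 𝕜]

noncomputable def discreteConv (f θ : G → 𝕜) (x : G) : 𝕜 := ∑' y, f (x * y⁻¹) * θ y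

variable {f g θ : G → 𝕜}

lemma summable_discreteConv_terms (hθ : (support θ).Finite) (x : G) :
    Summable fun y => f (x * y⁻¹) * θ y :=
  summable_of_hasFiniteSupport (hθ.subset (support_mul_subset_right _ _))

lemma discreteConv_sub_right {θ₁ θ₂ : G → 𝕜} (hθ₁ : (support θ₁).Finite)
    (hθ₂ : (support θ₂).Finite) (x : G) :
    discreteConv f (θ₁ - θ₂) x = discreteConv f θ₁ x - discreteConv f θ₂ x := by
  simp only [discreteConv, Pi.sub_apply, mul_sub]
  exact (summable_discreteConv_terms hθ₁ x).tsum_sub (summable_discreteConv_terms hθ₂ x)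

lemma discreteConv_congr_left {x : G} (h : ∀ y ∈ support θ, f (x * y⁻¹) = g (x * y⁻¹)) :
    discreteConv f θ x = discreteConv g θ x := by
  refine tsum_congr fun y => ?_
  by_cases hy : θ y = 0
  · simp [hy]
  · rw [h y hy]

lemma norm_discreteConv_le_of_norm_le (hθ : (support θ).Finite) (hfg : ∀ z, ‖f z‖ ≤ ‖g z‖)
    (x : G) : ‖discreteConv f θ x‖ ≤ ∑' y, ‖g (x * y⁻¹)‖ * ‖θ y‖ := by
  have hsumm : ∀ u : G → 𝕜, Summable fun y => ‖u (x * y⁻¹)‖ * ‖θ y‖ := fun u =>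
    summable_of_hasFiniteSupport <| hθ.subset <|
      (support_mul_subset_right _ _).trans (support_comp_subset norm_zero θ)
  calc ‖discreteConv f θ x‖ ≤ ∑' y, ‖f (x * y⁻¹) * θ y‖ := by
        refine norm_tsum_le_tsum_norm ?_
        simpa only [norm_mul] using hsumm f
    _ = ∑' y, ‖f (x * y⁻¹)‖ * ‖θ y‖ := by simp only [norm_mul]
    _ ≤ ∑' y, ‖g (x * y⁻¹)‖ * ‖θ y‖ :=
        (hsumm f).tsum_le_tsum (fun y => by gcongr; exact hfg _) (hsumm g)

lemma summable_sq_norm_discreteConv (hf : Summable fun x => ‖f x‖ ^ 2)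
    (hθ : (support θ).Finite) : Summable fun x => ‖discreteConv f θ x‖ ^ 2 := by
  have h2 : (0 : ℝ) < (2 : ENNReal).toReal := by norm_num
  have hmem : ∀ y, Memℓp (fun x => θ y * f (x * y⁻¹)) 2 := fun y =>
    Memℓp.const_mul ((memℓp_gen_iff h2).2 (by
      simpa [Function.comp_def] using (Equiv.mulRight y⁻¹).summable_iff.2 hf)) (θ y)
  have hconv : discreteConv f θ = fun x => ∑ y ∈ hθ.toFinset, θ y * f (x * y⁻¹) := by
    ext x
    refine tsum_eq_sum' ?_ |>.trans (sum_congr rfl fun y _ => mul_comm _ _)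
    exact (support_mul_subset_right _ θ).trans hθ.coe_toFinset.ge
  simpa [hconv] using (Memℓp.finsetSum _ fun y _ => hmem y).summable h2

end Convolution

section Truncation

variable {X E : Type*} [SeminormedAddGroup E] (f : X → E)

lemma sq_norm_indicator_le_mul_norm {t : ℝ} (ht : 0 ≤ t) (z : X) :
    ‖{w | ‖f w‖ ≤ t}.indicator f z‖ ^ 2 ≤ t * ‖f z‖ := by
  by_cases hz : ‖f z‖ ≤ t
  · rw [Set.indicator_of_mem (s := {w | ‖f w‖ ≤ t}) hz, sq]
    exact mul_le_mul_of_nonneg_right hz (norm_nonneg _)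
  · rw [Set.indicator_of_notMem (s := {w | ‖f w‖ ≤ t}) hz, norm_zero]
    simpa using mul_nonneg ht (norm_nonneg (f z))

lemma sum_inv_pow_mul_sq_norm_indicator_le {p a : ℝ} (hp : 1 < p) (ha : 0 < a) (K : Finset ℕ)
    (z : X) : ∑ k ∈ K, (p ^ k)⁻¹ * ‖{w | ‖f w‖ ≤ a * p ^ k}.indicator f z‖ ^ 2
      ≤ p / (p - 1) * a * ‖f z‖ := by
  have hterm : ∀ k, (p ^ k)⁻¹ * ‖{w | ‖f w‖ ≤ a * p ^ k}.indicator f z‖ ^ 2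
      = if ‖f z‖ ≤ a * p ^ k then (p ^ k)⁻¹ * ‖f z‖ ^ 2 else 0 := fun k => by
    by_cases hz : ‖f z‖ ≤ a * p ^ k
    · rw [Set.indicator_of_mem (s := {w | ‖f w‖ ≤ a * p ^ k}) hz, if_pos hz]
    · rw [Set.indicator_of_notMem (s := {w | ‖f w‖ ≤ a * p ^ k}) hz, if_neg hz, norm_zero]; ring
  rw [sum_congr rfl fun k _ => hterm k, ← sum_filter, ← sum_mul]
  rcases (norm_nonneg (f z)).eq_or_lt with h0 | hpos
  · simp [← h0]
  have hp1 : 0 < p - 1 := by linarith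
  calc (∑ k ∈ K with ‖f z‖ ≤ a * p ^ k, (p ^ k)⁻¹) * ‖f z‖ ^ 2
      ≤ p / (p - 1) * (‖f z‖ / a)⁻¹ * ‖f z‖ ^ 2 := by
        gcongr
        refine sum_inv_pow_le_of_forall_le_pow hp (div_pos hpos ha) _ fun k hk => ?_
        rw [div_le_iff₀' ha]
        exact (mem_filter.1 hk).2
    _ = p / (p - 1) * a * ‖f z‖ := by field_simp

end Truncation

/-- The maximal operator `f ↦ sup_k T k f` is of weak type (1,1); its level sets are written as
`{x | ∃ k, α < T k f x}`, so that no (possibly unbounded) supremum is formed. -/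
def MaximalWeakTypeOneOne {G 𝕜 : Type*} [Norm 𝕜] (T : ℕ → (G → 𝕜) → G → ℝ) : Prop :=
  ∃ C : ℝ, ∀ f : G → 𝕜, Summable (fun x => ‖f x‖) → ∀ α : ℝ, 0 < α →
    ∃ hfin : {x : G | ∃ k : ℕ, α < T k f x}.Finite,
      (hfin.toFinset.card : ℝ) ≤ C * α⁻¹ * ∑' x, ‖f x‖

section CalderonZygmund

variable {G 𝕜 : Type*} [Group G] [NormedField 𝕜] {p α : ℝ}

def exceptionalSet (μ : ℕ → G → 𝕜) (p : ℝ) (f : G → 𝕜) (α : ℝ) : Set G :=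
  {x | ∃ k, ∃ y ∈ support (μ k), α * p ^ k < ‖f (x * y⁻¹)‖}

variable {μ ν : ℕ → G → 𝕜} {f : G → 𝕜}

lemma discreteConv_eq_indicator_of_notMem_exceptionalSet {x : G}
    (hx : x ∉ exceptionalSet μ p f α) (k : ℕ) :
    discreteConv f (μ k) x = discreteConv ({z | ‖f z‖ ≤ α * p ^ k}.indicator f) (μ k) x :=
  discreteConv_congr_left fun y hy =>
    (Set.indicator_of_mem (s := {z | ‖f z‖ ≤ α * p ^ k})
      (not_lt.1 fun h => hx ⟨k, y, hy, h⟩) f).symm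

lemma exceptionalSet_subset_biUnion [DecidableEq G] (hp : 1 < p) (hα : 0 < α)
    (hμ : ∀ k, (support (μ k)).Finite) (hS : {z | α < ‖f z‖}.Finite)
    (hK : ∀ z, {k | α * p ^ k < ‖f z‖}.Finite) :
    exceptionalSet μ p f α ⊆ ↑(hS.toFinset.biUnion fun z =>
      (hK z).toFinset.biUnion fun k => (hμ k).toFinset.image (z * ·)) := by
  rintro x ⟨k, y, hy, hk⟩
  have hαk : α ≤ α * p ^ k := le_mul_of_one_le_right hα.le (one_le_pow₀ hp.le)
  simp only [coe_biUnion, coe_image, Set.mem_iUnion, Set.Finite.coe_toFinset]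
  exact ⟨x * y⁻¹, hαk.trans_lt hk, k, hk, y, hy, by group⟩

lemma finite_and_ncard_exceptionalSet_le (hp : 1 < p) (hα : 0 < α)
    (hf : Summable fun x => ‖f x‖) (hμ : ∀ k, (support (μ k)).Finite) {C : ℝ}
    (hC : ∀ k, ((hμ k).toFinset.card : ℝ) ≤ C * p ^ k) :
    (exceptionalSet μ p f α).Finite ∧
      ((exceptionalSet μ p f α).ncard : ℝ) ≤ C * (p / (p - 1)) * α⁻¹ * ∑' x, ‖f x‖ := by
  classical
  have hC0 : 0 ≤ C := by simpa using (Nat.cast_nonneg _).trans (hC 0)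
  have hS := hf.finite_setOf_lt hα
  have hK := fun z => finite_setOf_mul_pow_lt hp hα ‖f z‖
  set U := hS.toFinset.biUnion fun z =>
    (hK z).toFinset.biUnion fun k => (hμ k).toFinset.image (z * ·)
  have hsub : exceptionalSet μ p f α ⊆ U := exceptionalSet_subset_biUnion hp hα hμ hS hK
  have hcard : ∀ z, ∑ k ∈ (hK z).toFinset, (((hμ k).toFinset.image (z * ·)).card : ℝ)
      ≤ C * (p / (p - 1)) * α⁻¹ * ‖f z‖ := fun z => calc
    _ ≤ ∑ k ∈ (hK z).toFinset, C * p ^ k :=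
        sum_le_sum fun k _ => (Nat.cast_le.2 card_image_le).trans (hC k)
    _ ≤ C * (p / (p - 1) * (‖f z‖ / α)) := by
        rw [← mul_sum]
        refine mul_le_mul_of_nonneg_left (sum_pow_le_of_forall_pow_le hp (by positivity) _
          fun k hk => ?_) hC0
        rw [le_div_iff₀' hα]
        exact ((Set.Finite.mem_toFinset _).1 hk).le
    _ = C * (p / (p - 1)) * α⁻¹ * ‖f z‖ := by ring
  refine ⟨U.finite_toSet.subset hsub, ?_⟩
  calc ((exceptionalSet μ p f α).ncard : ℝ) ≤ U.card := by
        exact_mod_cast (Set.ncard_le_ncard hsub U.finite_toSet).trans_eq (Set.ncard_coe_finset U)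
    _ ≤ ∑ z ∈ hS.toFinset, ∑ k ∈ (hK z).toFinset, (((hμ k).toFinset.image (z * ·)).card : ℝ) := by
        exact_mod_cast card_biUnion_le.trans (sum_le_sum fun z _ => card_biUnion_le)
    _ ≤ ∑ z ∈ hS.toFinset, C * (p / (p - 1)) * α⁻¹ * ‖f z‖ := sum_le_sum fun z _ => hcard z
    _ ≤ C * (p / (p - 1)) * α⁻¹ * ∑' x, ‖f x‖ := by
        rw [← mul_sum]
        have hp1 : 0 < p - 1 := by linarith
        gcongr
        exact hf.sum_le_tsum _ fun _ _ => norm_nonneg _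

lemma finite_and_ncard_exists_lt_norm_discreteConv_indicator_le (hp : 1 < p) (hα : 0 < α)
    {β : ℝ} (hβ : 0 < β) (hf : Summable fun x => ‖f x‖) (hμ : ∀ k, (support (μ k)).Finite)
    (hν : ∀ k, (support (ν k)).Finite) {C : ℝ}
    (hL2 : ∀ k (g : G → 𝕜), Summable (fun x => ‖g x‖ ^ 2) →
      ∑' x, ‖discreteConv g (μ k - ν k) x‖ ^ 2 ≤ C ^ 2 * (p ^ k)⁻¹ * ∑' x, ‖g x‖ ^ 2) :
    let T := {x | ∃ k, β < ‖discreteConv ({z | ‖f z‖ ≤ α * p ^ k}.indicator f) (μ k - ν k) x‖}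
    T.Finite ∧ (T.ncard : ℝ) ≤ C ^ 2 * (p / (p - 1)) * α * (∑' x, ‖f x‖) / β ^ 2 := by
  have htrunc : ∀ k, Summable fun z => ‖{z | ‖f z‖ ≤ α * p ^ k}.indicator f z‖ ^ 2 := fun k =>
    (hf.mul_left (α * p ^ k)).of_nonneg_of_le (fun _ => by positivity)
      (sq_norm_indicator_le_mul_norm f (by positivity))
  refine finite_and_ncard_exists_lt_norm_le _ hβ (fun k => summable_sq_norm_discreteConv (htrunc k)
    (((hμ k).union (hν k)).subset (support_sub _ _))) fun I => ?_
  calc ∑ k ∈ I, ∑' x, ‖discreteConv ({z | ‖f z‖ ≤ α * p ^ k}.indicator f) (μ k - ν k) x‖ ^ 2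
      ≤ ∑ k ∈ I, C ^ 2 * ∑' z, (p ^ k)⁻¹ * ‖{z | ‖f z‖ ≤ α * p ^ k}.indicator f z‖ ^ 2 :=
        sum_le_sum fun k _ => (hL2 k _ (htrunc k)).trans_eq (by rw [tsum_mul_left]; ring)
    _ = C ^ 2 * ∑' z, ∑ k ∈ I, (p ^ k)⁻¹ * ‖{z | ‖f z‖ ≤ α * p ^ k}.indicator f z‖ ^ 2 := by
        rw [← mul_sum, Summable.tsum_finsetSum fun k _ => (htrunc k).mul_left _]
    _ ≤ C ^ 2 * ∑' z, p / (p - 1) * α * ‖f z‖ := by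
        refine mul_le_mul_of_nonneg_left ?_ (sq_nonneg C)
        exact (summable_sum fun k _ => (htrunc k).mul_left _).tsum_le_tsum
          (sum_inv_pow_mul_sq_norm_indicator_le f hp hα I) (hf.mul_left _)
    _ = C ^ 2 * (p / (p - 1)) * α * ∑' x, ‖f x‖ := by rw [tsum_mul_left]; ring

lemma setOf_lt_norm_discreteConv_subset (hμ : ∀ k, (support (μ k)).Finite)
    (hν : ∀ k, (support (ν k)).Finite) :
    {x | ∃ k, α < ‖discreteConv f (μ k) x‖} ⊆ exceptionalSet μ p f α
      ∪ {x | ∃ k, α / 2 < ∑' y, ‖f (x * y⁻¹)‖ * ‖ν k y‖}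
      ∪ {x | ∃ k, α / 2 <
          ‖discreteConv ({z | ‖f z‖ ≤ α * p ^ k}.indicator f) (μ k - ν k) x‖} := by
  rintro x ⟨k, hk⟩
  by_cases hx : x ∈ exceptionalSet μ p f α
  · exact Or.inl (Or.inl hx)
  set g := {z | ‖f z‖ ≤ α * p ^ k}.indicator f
  have hsplit : discreteConv g (μ k) x = discreteConv g (ν k) x + discreteConv g (μ k - ν k) x :=
    eq_add_of_sub_eq' (discreteConv_sub_right (hμ k) (hν k) x).symm
  have hνpart : ‖discreteConv g (ν k) x‖ ≤ ∑' y, ‖f (x * y⁻¹)‖ * ‖ν k y‖ :=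
    norm_discreteConv_le_of_norm_le (hν k) (fun _ => norm_indicator_le_norm_self _ _) x
  have hsum : α < ∑' y, ‖f (x * y⁻¹)‖ * ‖ν k y‖ + ‖discreteConv g (μ k - ν k) x‖ := by
    rw [discreteConv_eq_indicator_of_notMem_exceptionalSet hx, hsplit] at hk
    linarith [norm_add_le (discreteConv g (ν k) x) (discreteConv g (μ k - ν k) x)]
  rcases lt_or_ge (α / 2) (∑' y, ‖f (x * y⁻¹)‖ * ‖ν k y‖) with h | h
  · exact Or.inl (Or.inr ⟨k, h⟩)
  · exact Or.inr ⟨k, by linarith⟩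

end CalderonZygmund

theorem maximalWeakTypeOneOne_discreteConv {G 𝕜 : Type*} [Group G] [NormedField 𝕜] {p : ℝ}
    (hp : 1 < p) (μ ν : ℕ → G → 𝕜) (hμ : ∀ k, (support (μ k)).Finite)
    (hν : ∀ k, (support (ν k)).Finite)
    (hνmax : MaximalWeakTypeOneOne fun k (f : G → 𝕜) x => ∑' y, ‖f (x * y⁻¹)‖ * ‖ν k y‖)
    (hsupp : ∃ C : ℝ, ∀ k, ((hμ k).toFinset.card : ℝ) ≤ C * p ^ k)
    (hL2 : ∃ C : ℝ, ∀ k (g : G → 𝕜), Summable (fun x => ‖g x‖ ^ 2) →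
      ∑' x, ‖discreteConv g (μ k - ν k) x‖ ^ 2 ≤ C ^ 2 * (p ^ k)⁻¹ * ∑' x, ‖g x‖ ^ 2) :
    MaximalWeakTypeOneOne fun k (f : G → 𝕜) x => ‖discreteConv f (μ k) x‖ := by
  obtain ⟨C₀, hC₀⟩ := hνmax
  obtain ⟨C₁, hC₁⟩ := hsupp
  obtain ⟨C₂, hC₂⟩ := hL2
  refine ⟨C₁ * (p / (p - 1)) + 2 * C₀ + 4 * C₂ ^ 2 * (p / (p - 1)), fun f hf α hα => ?_⟩
  have hE := finite_and_ncard_exceptionalSet_le (f := f) hp hα hf hμ hC₁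
  have hA := Set.exists_finite_toFinset_card_le_iff.1 (hC₀ f hf (α / 2) (by positivity))
  have hT := finite_and_ncard_exists_lt_norm_discreteConv_indicator_le hp hα (half_pos hα) hf hμ
    hν hC₂
  obtain ⟨hfin, hcard⟩ := Set.finite_and_ncard_le_of_subset_union
    (setOf_lt_norm_discreteConv_subset hμ hν)
    (Set.finite_and_ncard_le_of_subset_union le_rfl hE hA) hT
  refine Set.exists_finite_toFinset_card_le_iff.2 ⟨hfin, hcard.trans_eq ?_⟩
  field_simp
  ring

theorem weak_type_one_one_of_difference_general
    {G : Type*} [Group G] (γ : ℝ) (hγ : 0 < γ)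
    (μ ν : ℕ → G → ℂ)
    (hμfin : ∀ k, (Function.support (μ k)).Finite)
    (hνfin : ∀ k, (Function.support (ν k)).Finite)
    (hνmax : ∃ C : ℝ, ∀ f : G → ℂ, Summable (fun x => ‖f x‖) → ∀ α : ℝ, 0 < α →
      ∃ hfin : {x : G | ∃ k : ℕ, α < ∑' y, ‖f (x * y⁻¹)‖ * ‖ν k y‖}.Finite,
        (hfin.toFinset.card : ℝ) ≤ C * α⁻¹ * ∑' x, ‖f x‖)
    (hsupp : ∃ C : ℝ, ∀ k, ((hμfin k).toFinset.card : ℝ) ≤ C * (2 : ℝ) ^ ((k : ℝ) * γ))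
    (hL2 : ∃ C : ℝ, ∀ k, ∀ f : G → ℂ, Summable (fun x => ‖f x‖ ^ 2) →
      Real.sqrt (∑' x, ‖∑' y, f (x * y⁻¹) * (μ k y - ν k y)‖ ^ 2)
        ≤ C * (2 : ℝ) ^ (-(k : ℝ) * γ / 2) * Real.sqrt (∑' x, ‖f x‖ ^ 2)) :
    ∃ C' : ℝ, ∀ f : G → ℂ, Summable (fun x => ‖f x‖) → ∀ α : ℝ, 0 < α →
      ∃ hfin : {x : G | ∃ k : ℕ, α < ‖∑' y, f (x * y⁻¹) * μ k y‖}.Finite,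
        (hfin.toFinset.card : ℝ) ≤ C' * α⁻¹ * ∑' x, ‖f x‖ := by
  have hpow : ∀ k : ℕ, (2 : ℝ) ^ ((k : ℝ) * γ) = ((2 : ℝ) ^ γ) ^ k := fun k => by
    rw [mul_comm, Real.rpow_mul_natCast zero_le_two]
  have hsq : ∀ k : ℕ, ((2 : ℝ) ^ (-(k : ℝ) * γ / 2)) ^ 2 = (((2 : ℝ) ^ γ) ^ k)⁻¹ := fun k => by
    rw [← hpow, ← Real.rpow_natCast, ← Real.rpow_mul zero_le_two, ← Real.rpow_neg zero_le_two]
    congr 1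
    push_cast
    ring
  refine maximalWeakTypeOneOne_discreteConv (Real.one_lt_rpow one_lt_two hγ) μ ν hμfin hνfin
    hνmax (hsupp.imp fun C hC k => (hC k).trans_eq (by rw [hpow])) ?_
  obtain ⟨C, hC⟩ := hL2
  refine ⟨C, fun k f hf => ?_⟩
  have h := (Real.sqrt_le_iff.1 (hC k f hf)).2
  rwa [mul_pow, mul_pow, hsq, Real.sq_sqrt (tsum_nonneg fun _ => by positivity)] at h

/-- **Theorem (Tauberian criterion for weak type (1,1)).**
Let `G` be a countable discrete group, `γ > 0`, and let `μ k, ν k : G → ℂ` be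
finitely supported.  Here convolution is `(f * μ)(x) = ∑' y, f (x * y⁻¹) * μ y`.
Assume:
(i) the maximal operator `f ↦ sup_k (|f| * |ν k|)` is of weak type (1,1);
(ii) `|support (μ k)| ≤ C * 2^(kγ)` for some `C` and all `k`;
(iii) `‖f * (μ k - ν k)‖₂ ≤ C * 2^(-kγ/2) * ‖f‖₂` for some `C`, all `f ∈ ℓ²(G)`, all `k`.
Then the maximal operator `f ↦ sup_k |f * μ k|` is of weak type (1,1) on `G`. -/
theorem weak_type_one_one_of_difference
    {G : Type*} [Group G] [Countable G] (γ : ℝ) (hγ : 0 < γ)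
    (μ ν : ℕ → G → ℂ)
    (hμfin : ∀ k, (Function.support (μ k)).Finite)
    (hνfin : ∀ k, (Function.support (ν k)).Finite)
    (hνmax : ∃ C : ℝ, ∀ f : G → ℂ, Summable (fun x => ‖f x‖) → ∀ α : ℝ, 0 < α →
      ∃ hfin : {x : G | ∃ k : ℕ, α < ∑' y, ‖f (x * y⁻¹)‖ * ‖ν k y‖}.Finite,
        (hfin.toFinset.card : ℝ) ≤ C * α⁻¹ * ∑' x, ‖f x‖)
    (hsupp : ∃ C : ℝ, ∀ k, ((hμfin k).toFinset.card : ℝ) ≤ C * (2 : ℝ) ^ ((k : ℝ) * γ))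
    (hL2 : ∃ C : ℝ, ∀ k, ∀ f : G → ℂ, Summable (fun x => ‖f x‖ ^ 2) →
      Real.sqrt (∑' x, ‖∑' y, f (x * y⁻¹) * (μ k y - ν k y)‖ ^ 2)
        ≤ C * (2 : ℝ) ^ (-(k : ℝ) * γ / 2) * Real.sqrt (∑' x, ‖f x‖ ^ 2)) :
    ∃ C' : ℝ, ∀ f : G → ℂ, Summable (fun x => ‖f x‖) → ∀ α : ℝ, 0 < α →
      ∃ hfin : {x : G | ∃ k : ℕ, α < ‖∑' y, f (x * y⁻¹) * μ k y‖}.Finite,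
        (hfin.toFinset.card : ℝ) ≤ C' * α⁻¹ * ∑' x, ‖f x‖ :=
  weak_type_one_one_of_difference_general γ hγ μ ν hμfin hνfin hνmax hsupp hL2
end

section
/- Let G be a countable discrete group, let γ > 0 and C₀ < ∞, and let μ_k : G → ℂ (k ∈ ℕ) be finitely supported functions with |support(μ_k)| ≤ C₀·2^{kγ} for all k. Let f ∈ ℓ¹(G) and α > 0. For j ∈ ℤ let f_j be the restriction of f to {x : 2^j ≤ |f(x)| < 2^{j+1}} (extended by zero), and define the exceptional set ℰ = ∪_{j∈ℤ} ∪_{k : 2^{kγ} < α^{−1}2^j} ( support(f_j) + support(μ_k) ), where A + B denotes the product set {ab : a ∈ A, b ∈ B}. Then there is a constant C, depending only on γ and C₀, such that |ℰ| ≤ C α^{−1} ‖f‖_{ℓ¹}. -/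
open Pointwise

lemma geom_sum_bound' {r T : ℝ} (hr : 1 < r) (hT : 0 ≤ T) (K : Finset ℕ)
    (hK : ∀ k ∈ K, r ^ k < T) : ∑ k ∈ K, r ^ k ≤ r / (r - 1) * T := by
  have hr0 : (0:ℝ) < r := lt_trans one_pos hr
  have hr1 : (0:ℝ) < r - 1 := sub_pos.mpr hr
  rcases K.eq_empty_or_nonempty with h | h
  · simp only [h, Finset.sum_empty]; positivity
  · set N := K.max' h with hN
    have hNK := K.max'_mem h
    have hsub : K ⊆ Finset.range (N + 1) := fun k hk =>
      Finset.mem_range.mpr (Nat.lt_succ_of_le (K.le_max' k hk))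
    calc ∑ k ∈ K, r ^ k ≤ ∑ k ∈ Finset.range (N + 1), r ^ k :=
          Finset.sum_le_sum_of_subset_of_nonneg hsub (by intros; positivity)
      _ = (r ^ (N + 1) - 1) / (r - 1) := geom_sum_eq (ne_of_gt hr) _
      _ ≤ r ^ (N + 1) / (r - 1) := by gcongr; linarith
      _ = r * r ^ N / (r - 1) := by ring
      _ ≤ r * T / (r - 1) := by gcongr; exact (hK _ hNK).le
      _ = r / (r - 1) * T := by ring


/-- **Lemma (size of the exceptional set).**
Let `γ > 0`, `C₀ < ∞`.  There is a constant `C = C(γ, C₀)` such that for every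
countable discrete group `G`, finitely supported `μ k : G → ℂ` with
`|support (μ k)| ≤ C₀ * 2^(kγ)`, every `f ∈ ℓ¹(G)` and `α > 0`, the exceptional set
`ℰ = ⋃_{j ∈ ℤ} ⋃_{k : 2^(kγ) < α⁻¹ 2^j} (support f_j + support (μ k))`
(where `f_j` is the restriction of `f` to `{x : 2^j ≤ |f x| < 2^(j+1)}` and `A + B`
is the product set `{a*b}`) satisfies `|ℰ| ≤ C * α⁻¹ * ‖f‖₁`. -/
theorem exceptional_set_bound (γ : ℝ) (hγ : 0 < γ) (C₀ : ℝ) :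
    ∃ C : ℝ, ∀ (G : Type) [Group G] [Countable G], ∀ (μ : ℕ → G → ℂ)
      (hsupp : ∀ k, (Function.support (μ k)).Finite),
      (∀ k, ((hsupp k).toFinset.card : ℝ) ≤ C₀ * (2 : ℝ) ^ ((k : ℝ) * γ)) →
      ∀ f : G → ℂ, Summable (fun x => ‖f x‖) → ∀ α : ℝ, 0 < α →
      ∃ hfin : (⋃ j : ℤ, ⋃ k ∈ {k : ℕ | (2 : ℝ) ^ ((k : ℝ) * γ) < α⁻¹ * (2 : ℝ) ^ j},
          Function.support
              (fun x => if (2 : ℝ) ^ j ≤ ‖f x‖ ∧ ‖f x‖ < (2 : ℝ) ^ (j + 1) then f x else 0)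
            * Function.support (μ k)).Finite,
        (hfin.toFinset.card : ℝ) ≤ C * α⁻¹ * ∑' x, ‖f x‖ := by
  classical
  set r : ℝ := (2:ℝ) ^ γ with hrdef
  have hr : 1 < r := by
    rw [show (1:ℝ) = (2:ℝ) ^ (0:ℝ) by simp]
    exact Real.rpow_lt_rpow_of_exponent_lt one_lt_two hγ
  have hr0 : (0:ℝ) < r := lt_trans one_pos hr
  have hr1 : (0:ℝ) < r - 1 := sub_pos.mpr hr
  have hrpow : ∀ k : ℕ, (2:ℝ) ^ ((k:ℝ) * γ) = r ^ k := by
    intro k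
    rw [hrdef, ← Real.rpow_natCast ((2:ℝ)^γ) k, ← Real.rpow_mul (by norm_num), mul_comm]
  set C₀' : ℝ := max C₀ 0 with hC₀'def
  have hC₀'0 : 0 ≤ C₀' := le_max_right _ _
  refine ⟨C₀' * (r / (r - 1)), ?_⟩
  intro G _ _ μ hsupp hcard f hsum α hα
  set T₀ : ℝ := ∑' x, ‖f x‖ with hT₀def
  have hT₀0 : 0 ≤ T₀ := tsum_nonneg fun x => norm_nonneg _
  have hle : ∀ x, ‖f x‖ ≤ T₀ := fun x => Summable.le_tsum hsum x fun _ _ => norm_nonneg _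
  -- level sets of f
  set fj : ℤ → G → ℂ := fun j x =>
    if (2 : ℝ) ^ j ≤ ‖f x‖ ∧ ‖f x‖ < (2 : ℝ) ^ (j + 1) then f x else 0 with hfjdef
  have hlevel : ∀ ε : ℝ, 0 < ε → {x : G | ε ≤ ‖f x‖}.Finite := by
    intro ε hε
    have h := hsum.tendsto_cofinite_zero
    have h2 : ∀ᶠ x in Filter.cofinite, ‖f x‖ < ε := h.eventually (gt_mem_nhds hε)
    have h3 := Filter.eventually_cofinite.mp h2
    exact h3.subset fun x hx => by simpa using hx
  have hmemsupp : ∀ j x, x ∈ Function.support (fj j) →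
      (2 : ℝ) ^ j ≤ ‖f x‖ ∧ ‖f x‖ < (2 : ℝ) ^ (j + 1) := by
    intro j x hx
    by_contra h
    exact hx (if_neg h)
  have hFfin : ∀ j : ℤ, (Function.support (fj j)).Finite := by
    intro j
    exact (hlevel ((2:ℝ)^j) (by positivity)).subset fun x hx => (hmemsupp j x hx).1
  -- the finite index set for k
  have hKfin : ∀ j : ℤ, {k : ℕ | r ^ k < α⁻¹ * (2:ℝ) ^ j}.Finite := by
    intro j
    have h := tendsto_pow_atTop_atTop_of_one_lt hr
    have h2 : ∀ᶠ k in Filter.atTop, α⁻¹ * (2:ℝ) ^ j ≤ r ^ k :=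
      h.eventually_ge_atTop _
    rw [← Nat.cofinite_eq_atTop] at h2
    exact (Filter.eventually_cofinite.mp h2).subset fun k hk => by simpa using not_le.mpr hk
  set Jfin : Finset ℤ := Finset.Icc (Int.log 2 α + 1) (Int.log 2 T₀) with hJdef
  set E' : Finset G := Jfin.biUnion (fun j => ((hKfin j).toFinset).biUnion
      (fun k => (hFfin j).toFinset * (hsupp k).toFinset)) with hE'def
  -- the exceptional set is contained in E'
  have hsub : (⋃ j : ℤ, ⋃ k ∈ {k : ℕ | (2 : ℝ) ^ ((k : ℝ) * γ) < α⁻¹ * (2 : ℝ) ^ j},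
      Function.support (fj j) * Function.support (μ k)) ⊆ (E' : Set G) := by
    intro x hx
    simp only [Set.mem_iUnion, Set.mem_setOf_eq] at hx
    obtain ⟨j, k, hk, hxmem⟩ := hx
    rw [hrpow] at hk
    obtain ⟨a, ha, b, hb, rfl⟩ := hxmem
    have ha' := hmemsupp j a ha
    have h2jpos : (0:ℝ) < (2:ℝ) ^ j := by positivity
    have hjT : (2:ℝ) ^ j ≤ T₀ := ha'.1.trans (hle a)
    have hT₀pos : 0 < T₀ := lt_of_lt_of_le h2jpos hjT
    have hrk1 : (1:ℝ) ≤ r ^ k := one_le_pow₀ hr.le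
    have hα2j : α < (2:ℝ) ^ j := by
      have : (1:ℝ) < α⁻¹ * (2:ℝ) ^ j := lt_of_le_of_lt hrk1 hk
      rw [inv_mul_eq_div, lt_div_iff₀ hα, one_mul] at this
      exact this
    have hjlo : Int.log 2 α < j := by
      refine (Int.lt_zpow_iff_log_lt (by norm_num) hα).mp ?_
      push_cast; exact hα2j
    have hjhi : j ≤ Int.log 2 T₀ := by
      refine (Int.zpow_le_iff_le_log (by norm_num) hT₀pos).mp ?_
      push_cast; exact hjT
    simp only [hE'def, Finset.coe_biUnion, Set.mem_iUnion, Finset.mem_coe]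
    refine ⟨j, Finset.mem_Icc.mpr ⟨hjlo, hjhi⟩, k, (hKfin j).mem_toFinset.mpr hk, ?_⟩
    exact Finset.mul_mem_mul ((hFfin j).mem_toFinset.mpr ha) ((hsupp k).mem_toFinset.mpr hb)
  have hfin : (⋃ j : ℤ, ⋃ k ∈ {k : ℕ | (2 : ℝ) ^ ((k : ℝ) * γ) < α⁻¹ * (2 : ℝ) ^ j},
      Function.support (fj j) * Function.support (μ k)).Finite :=
    E'.finite_toSet.subset hsub
  refine ⟨hfin, ?_⟩
  have hcard1 : hfin.toFinset.card ≤ E'.card :=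
    Finset.card_le_card (by rw [Set.Finite.toFinset_subset]; exact hsub)
  -- bound on card of each μ support
  have hcardM : ∀ k : ℕ, ((hsupp k).toFinset.card : ℝ) ≤ C₀' * r ^ k := by
    intro k
    refine (hcard k).trans ?_
    rw [hrpow]
    have : (0:ℝ) ≤ r ^ k := by positivity
    exact mul_le_mul_of_nonneg_right (le_max_left _ _) this
  -- key level-sum bound
  have hlevelsum : ∑ j ∈ Jfin, ((hFfin j).toFinset.card : ℝ) * (2:ℝ) ^ j ≤ T₀ := by
    have hdisj : ∀ j ∈ Jfin, ∀ j' ∈ Jfin, j ≠ j' →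
        Disjoint ((hFfin j).toFinset) ((hFfin j').toFinset) := by
      intro j _ j' _ hne
      rw [Finset.disjoint_left]
      intro x hx hx'
      have h1 := hmemsupp j x ((hFfin j).mem_toFinset.mp hx)
      have h2 := hmemsupp j' x ((hFfin j').mem_toFinset.mp hx')
      rcases hne.lt_or_gt with h | h
      · have : (2:ℝ) ^ (j+1) ≤ 2 ^ j' := zpow_le_zpow_right₀ one_le_two (by omega)
        linarith [h1.2, h2.1]
      · have : (2:ℝ) ^ (j'+1) ≤ 2 ^ j := zpow_le_zpow_right₀ one_le_two (by omega)
        linarith [h1.1, h2.2]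
    have hstep : ∀ j ∈ Jfin, ((hFfin j).toFinset.card : ℝ) * (2:ℝ) ^ j ≤
        ∑ x ∈ (hFfin j).toFinset, ‖f x‖ := by
      intro j _
      have := Finset.card_nsmul_le_sum ((hFfin j).toFinset) (fun x => ‖f x‖) ((2:ℝ)^j)
        (fun x hx => (hmemsupp j x ((hFfin j).mem_toFinset.mp hx)).1)
      simpa [nsmul_eq_mul] using this
    calc ∑ j ∈ Jfin, ((hFfin j).toFinset.card : ℝ) * (2:ℝ) ^ j
        ≤ ∑ j ∈ Jfin, ∑ x ∈ (hFfin j).toFinset, ‖f x‖ := Finset.sum_le_sum hstep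
      _ = ∑ x ∈ Jfin.biUnion (fun j => (hFfin j).toFinset), ‖f x‖ :=
          (Finset.sum_biUnion hdisj).symm
      _ ≤ T₀ := Summable.sum_le_tsum _ (fun x _ => norm_nonneg _) hsum
  -- main chain
  refine le_trans (Nat.cast_le.mpr hcard1) ?_
  have hchain : (E'.card : ℝ) ≤
      ∑ j ∈ Jfin, ∑ k ∈ (hKfin j).toFinset,
        (((hFfin j).toFinset.card : ℝ) * ((hsupp k).toFinset.card : ℝ)) := by
    refine le_trans (Nat.cast_le.mpr (Finset.card_biUnion_le)) ?_
    push_cast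
    refine Finset.sum_le_sum fun j _ => ?_
    refine le_trans (Nat.cast_le.mpr (Finset.card_biUnion_le)) ?_
    push_cast
    refine Finset.sum_le_sum fun k _ => ?_
    exact_mod_cast Nat.cast_le.mpr (Finset.card_mul_le)
  refine hchain.trans ?_
  have hperj : ∀ j ∈ Jfin, ∑ k ∈ (hKfin j).toFinset,
      (((hFfin j).toFinset.card : ℝ) * ((hsupp k).toFinset.card : ℝ)) ≤
      ((hFfin j).toFinset.card : ℝ) * (C₀' * (r / (r - 1) * (α⁻¹ * (2:ℝ) ^ j))) := by
    intro j _
    rw [← Finset.mul_sum]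
    refine mul_le_mul_of_nonneg_left ?_ (Nat.cast_nonneg _)
    have h1 : ∑ k ∈ (hKfin j).toFinset, ((hsupp k).toFinset.card : ℝ) ≤
        ∑ k ∈ (hKfin j).toFinset, C₀' * r ^ k :=
      Finset.sum_le_sum fun k _ => hcardM k
    refine h1.trans ?_
    rw [← Finset.mul_sum]
    refine mul_le_mul_of_nonneg_left ?_ hC₀'0
    refine geom_sum_bound' hr (by positivity) _ ?_
    intro k hk
    exact (hKfin j).mem_toFinset.mp hk
  refine (Finset.sum_le_sum hperj).trans ?_
  have : ∑ j ∈ Jfin, ((hFfin j).toFinset.card : ℝ) * (C₀' * (r / (r - 1) * (α⁻¹ * (2:ℝ) ^ j)))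
      = C₀' * (r / (r - 1)) * α⁻¹ * ∑ j ∈ Jfin, ((hFfin j).toFinset.card : ℝ) * (2:ℝ) ^ j := by
    rw [Finset.mul_sum]; refine Finset.sum_congr rfl fun j _ => by ring
  rw [this]
  refine mul_le_mul_of_nonneg_left hlevelsum ?_
  positivity
end

section
/- Let G be a countable discrete group, let γ > 0 and C₀ < ∞, and let λ_k : G → ℂ (k ∈ ℕ) satisfy ‖f * λ_k‖_{ℓ²} ≤ C₀·2^{−kγ/2}‖f‖_{ℓ²} for all f ∈ ℓ²(G) and all k. Let f ∈ ℓ¹(G) and α > 0, and for j ∈ ℤ let f_j be the restriction of f to {x : 2^j ≤ |f(x)| < 2^{j+1}} (extended by zero). For each integer s ≥ 0 and each k, let j(k,s) be the unique integer with 2^{kγ−s}α ≤ 2^{j(k,s)} < 2^{kγ−s+1}α, and define G_s(x) = ( Σ_k |f_{j(k,s)} * λ_k (x)|² )^{1/2}. Then there is a constant C, depending only on γ and C₀, such that ‖G_s‖_{ℓ²}² ≤ C·2^{−s}·α·‖f‖_{ℓ¹} for every s ≥ 0. -/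
open Filter Finset


/-- **Lemma (square function estimate).**
Let `γ > 0`, `C₀ < ∞`.  There is a constant `C = C(γ, C₀)` such that for every
countable discrete group `G` and every family `λ k : G → ℂ` obeying the `ℓ² → ℓ²`
bound `‖f * λ k‖₂ ≤ C₀ 2^(-kγ/2) ‖f‖₂`, every `f ∈ ℓ¹(G)`, `α > 0`, every choice
`J k s` of the unique integer with `2^(kγ-s) α ≤ 2^(J k s) < 2^(kγ-s+1) α`, and every
`s ≥ 0`, the square function `G_s(x) = (∑_k |f_{J k s} * λ_k (x)|²)^(1/2)` satisfies
`‖G_s‖₂² ≤ C 2^(-s) α ‖f‖₁`.  Here `f_j` is the restriction of `f` to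
`{x : 2^j ≤ |f x| < 2^(j+1)}` and `(f * λ)(x) = ∑' y, f (x y⁻¹) λ y`. -/
theorem square_function_bound (γ : ℝ) (hγ : 0 < γ) (C₀ : ℝ) :
    ∃ C : ℝ, ∀ (G : Type) [Group G] [Countable G], ∀ lam : ℕ → G → ℂ,
      (∀ k, ∀ f : G → ℂ, Summable (fun x => ‖f x‖ ^ 2) →
        Real.sqrt (∑' x, ‖∑' y, f (x * y⁻¹) * lam k y‖ ^ 2)
          ≤ C₀ * (2 : ℝ) ^ (-(k : ℝ) * γ / 2) * Real.sqrt (∑' x, ‖f x‖ ^ 2)) →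
      ∀ f : G → ℂ, Summable (fun x => ‖f x‖) → ∀ α : ℝ, 0 < α →
      ∀ J : ℕ → ℕ → ℤ,
      (∀ k s : ℕ, (2 : ℝ) ^ ((k : ℝ) * γ - (s : ℝ)) * α ≤ (2 : ℝ) ^ ((J k s : ℝ)) ∧
        (2 : ℝ) ^ ((J k s : ℝ)) < (2 : ℝ) ^ ((k : ℝ) * γ - (s : ℝ) + 1) * α) →
      ∀ s : ℕ,
        (∑' x : G, ∑' k : ℕ,
            ‖∑' y, (if (2 : ℝ) ^ (J k s) ≤ ‖f (x * y⁻¹)‖ ∧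
                      ‖f (x * y⁻¹)‖ < (2 : ℝ) ^ (J k s + 1)
                    then f (x * y⁻¹) else 0) * lam k y‖ ^ 2)
          ≤ C * (2 : ℝ) ^ (-(s : ℝ)) * α * ∑' x, ‖f x‖ := by
  refine ⟨4 * C₀ ^ 2 * ((⌈2 / γ⌉₊ : ℕ) + 1 : ℕ), ?_⟩
  intro G _ _ lam hbound f hf1 α hα J hJ s
  set N : ℕ := (⌈2 / γ⌉₊ : ℕ) + 1 with hNdef
  set M : ℝ := ∑' x, ‖f x‖ with hMdef
  have hM0 : 0 ≤ M := tsum_nonneg fun x => norm_nonneg _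
  have hfx_le : ∀ x, ‖f x‖ ≤ M := fun x => Summable.le_tsum hf1 x fun y _ => norm_nonneg _
  -- bridge rpow / zpow
  have hJ1 : ∀ k : ℕ, (2 : ℝ) ^ ((k : ℝ) * γ - (s : ℝ)) * α ≤ (2 : ℝ) ^ (J k s) := by
    intro k; rw [← Real.rpow_intCast 2 (J k s)]; exact (hJ k s).1
  have hJ2 : ∀ k : ℕ, ((2 : ℝ) ^ (J k s) : ℝ) < (2 : ℝ) ^ ((k : ℝ) * γ - (s : ℝ) + 1) * α := by
    intro k; rw [← Real.rpow_intCast 2 (J k s)]; exact (hJ k s).2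
  have hJ2' : ∀ k : ℕ, (2 : ℝ) ^ ((J k s : ℝ) + 1) < 2 * ((2 : ℝ) ^ ((k : ℝ) * γ - (s : ℝ) + 1) * α) := by
    intro k
    rw [Real.rpow_add two_pos, Real.rpow_one, mul_comm]
    have := hJ2 k
    rw [← Real.rpow_intCast 2 (J k s)] at this
    nlinarith
  -- the restricted functions
  set g : ℕ → G → ℂ := fun k x =>
    if (2 : ℝ) ^ (J k s) ≤ ‖f x‖ ∧ ‖f x‖ < (2 : ℝ) ^ (J k s + 1) then f x else 0 with hgdef
  set A : ℕ → G → ℝ := fun k x => ‖∑' y, g k (x * y⁻¹) * lam k y‖ ^ 2 with hAdef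
  have hA0 : ∀ k x, 0 ≤ A k x := fun k x => pow_nonneg (norm_nonneg _) 2
  have hgoal : (∑' x : G, ∑' k : ℕ,
      ‖∑' y, (if (2 : ℝ) ^ (J k s) ≤ ‖f (x * y⁻¹)‖ ∧
                ‖f (x * y⁻¹)‖ < (2 : ℝ) ^ (J k s + 1)
              then f (x * y⁻¹) else 0) * lam k y‖ ^ 2) = ∑' x : G, ∑' k : ℕ, A k x := rfl
  rw [hgoal]
  -- the cutoff K
  have htend : Tendsto (fun k : ℕ => (2 : ℝ) ^ ((k : ℝ) * γ - (s : ℝ)) * α) atTop atTop := by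
    apply Tendsto.atTop_mul_const hα
    have h1 : Tendsto (fun k : ℕ => (k : ℝ) * γ - (s : ℝ)) atTop atTop :=
      tendsto_atTop_add_const_right _ (-(s : ℝ))
        (tendsto_natCast_atTop_atTop.atTop_mul_const hγ)
    have h2 : Tendsto (fun y : ℝ => (2 : ℝ) ^ y) atTop atTop := by
      have : ∀ y : ℝ, (2 : ℝ) ^ y = Real.exp (Real.log 2 * y) := fun y =>
        Real.rpow_def_of_pos two_pos y
      simp only [this]
      exact Real.tendsto_exp_atTop.comp
        ((tendsto_id (α := ℝ)).const_mul_atTop (Real.log_pos one_lt_two))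
    exact h2.comp h1
  obtain ⟨K, hK⟩ := Filter.eventually_atTop.1 (htend.eventually_gt_atTop M)
  have hgz : ∀ k : ℕ, K ≤ k → ∀ x : G, g k x = 0 := by
    intro k hk x
    apply if_neg
    rintro ⟨h1, _⟩
    have h3 : (2 : ℝ) ^ (J k s) ≤ M := h1.trans (hfx_le x)
    have h4 := (hK k hk).trans_le (hJ1 k)
    linarith
  have hAzero : ∀ k : ℕ, k ∉ Finset.range K → ∀ x : G, A k x = 0 := by
    intro k hk x
    have hk' : K ≤ k := by simpa using hk
    have : (fun y : G => g k (x * y⁻¹) * lam k y) = fun _ => 0 := by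
      funext y; rw [hgz k hk', zero_mul]
    show ‖∑' y, g k (x * y⁻¹) * lam k y‖ ^ 2 = 0
    rw [this, tsum_zero, norm_zero]
    norm_num
  have hinner : ∀ x : G, ∑' k : ℕ, A k x = ∑ k ∈ Finset.range K, A k x := fun x =>
    tsum_eq_sum fun k hk => hAzero k hk x
  -- the level-set mass
  set S : ℕ → ℝ := fun k => ∑' x, (if (2 : ℝ) ^ (J k s) ≤ ‖f x‖ ∧ ‖f x‖ < (2 : ℝ) ^ (J k s + 1)
      then ‖f x‖ else 0) with hSdef
  have hSsummable : ∀ k : ℕ, Summable (fun x : G =>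
      (if (2 : ℝ) ^ (J k s) ≤ ‖f x‖ ∧ ‖f x‖ < (2 : ℝ) ^ (J k s + 1) then ‖f x‖ else 0)) := by
    intro k
    apply Summable.of_nonneg_of_le _ _ hf1
    · intro x; split <;> simp [norm_nonneg]
    · intro x; split <;> simp [norm_nonneg]
  have hS0 : ∀ k, 0 ≤ S k := fun k => tsum_nonneg fun x => by split <;> simp [norm_nonneg]
  -- per-k summability of ‖g k‖²
  have hgsq : ∀ k : ℕ, Summable (fun x : G => ‖g k x‖ ^ 2) := by
    intro k
    apply Summable.of_nonneg_of_le (fun x => by positivity) _ (hf1.mul_left M)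
    intro x
    simp only [hgdef]
    split
    · calc ‖f x‖ ^ 2 = ‖f x‖ * ‖f x‖ := sq ‖f x‖
        _ ≤ M * ‖f x‖ := mul_le_mul_of_nonneg_right (hfx_le x) (norm_nonneg _)
    · simpa using mul_nonneg hM0 (norm_nonneg (f x))
  -- ℓ² mass of g k against level set mass
  have hU : ∀ k : ℕ, ∑' x, ‖g k x‖ ^ 2 ≤ (2 : ℝ) ^ ((J k s : ℝ) + 1) * S k := by
    intro k
    have hpt : ∀ x : G, ‖g k x‖ ^ 2 ≤ (2 : ℝ) ^ ((J k s : ℝ) + 1) *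
        (if (2 : ℝ) ^ (J k s) ≤ ‖f x‖ ∧ ‖f x‖ < (2 : ℝ) ^ (J k s + 1) then ‖f x‖ else 0) := by
      intro x
      simp only [hgdef]
      split
      · rename_i h
        have hlt : ‖f x‖ ≤ (2 : ℝ) ^ ((J k s : ℝ) + 1) := by
          have h2 := h.2
          rw [show ((J k s : ℝ) + 1) = ((J k s + 1 : ℤ) : ℝ) by push_cast; ring,
            Real.rpow_intCast 2 (J k s + 1)]
          exact h2.le
        calc ‖f x‖ ^ 2 = ‖f x‖ * ‖f x‖ := sq ‖f x‖
          _ ≤ (2 : ℝ) ^ ((J k s : ℝ) + 1) * ‖f x‖ :=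
            mul_le_mul_of_nonneg_right hlt (norm_nonneg _)
      · simp
    have := Summable.tsum_le_tsum hpt (hgsq k) ((hSsummable k).mul_left _)
    rwa [tsum_mul_left] at this
  -- the ℓ² → ℓ² hypothesis, squared
  have hconv : ∀ k : ℕ, ∑' x, A k x ≤ C₀ ^ 2 * (2 : ℝ) ^ (-(k : ℝ) * γ) * ∑' x, ‖g k x‖ ^ 2 := by
    intro k
    have h := hbound k (g k) (hgsq k)
    have t0 : 0 ≤ ∑' x, A k x := tsum_nonneg fun x => hA0 k x
    have hU0 : 0 ≤ ∑' x, ‖g k x‖ ^ 2 := tsum_nonneg fun x => by positivity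
    have hc2 : ((2 : ℝ) ^ (-(k : ℝ) * γ / 2)) ^ 2 = (2 : ℝ) ^ (-(k : ℝ) * γ) := by
      rw [← Real.rpow_natCast ((2 : ℝ) ^ (-(k : ℝ) * γ / 2)) 2,
        ← Real.rpow_mul (by norm_num : (0:ℝ) ≤ 2)]
      norm_num
    calc ∑' x, A k x = Real.sqrt (∑' x, A k x) ^ 2 := (Real.sq_sqrt t0).symm
      _ ≤ (C₀ * (2 : ℝ) ^ (-(k : ℝ) * γ / 2) * Real.sqrt (∑' x, ‖g k x‖ ^ 2)) ^ 2 :=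
        pow_le_pow_left₀ (Real.sqrt_nonneg _) h 2
      _ = C₀ ^ 2 * (2 : ℝ) ^ (-(k : ℝ) * γ) * ∑' x, ‖g k x‖ ^ 2 := by
        rw [mul_pow, mul_pow, Real.sq_sqrt hU0, hc2]
  -- combine into per-k estimate
  have hkey : ∀ k : ℕ, ∑' x, A k x ≤ C₀ ^ 2 * (4 * (2 : ℝ) ^ (-(s : ℝ)) * α) * S k := by
    intro k
    have hexp : (2 : ℝ) ^ (-(k : ℝ) * γ) * (2 : ℝ) ^ ((k : ℝ) * γ - (s : ℝ) + 1)
        = (2 : ℝ) ^ (-(s : ℝ) + 1) := by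
      rw [← Real.rpow_add two_pos]; congr 1; ring
    have hcc : (2 : ℝ) ^ (-(k : ℝ) * γ) * (2 : ℝ) ^ ((J k s : ℝ) + 1)
        ≤ 4 * (2 : ℝ) ^ (-(s : ℝ)) * α := by
      have h1 := hJ2' k
      have hpos : (0:ℝ) < (2 : ℝ) ^ (-(k : ℝ) * γ) := Real.rpow_pos_of_pos two_pos _
      have h2 : (2 : ℝ) ^ (-(k : ℝ) * γ) * (2 : ℝ) ^ ((J k s : ℝ) + 1)
          ≤ (2 : ℝ) ^ (-(k : ℝ) * γ) * (2 * ((2 : ℝ) ^ ((k : ℝ) * γ - (s : ℝ) + 1) * α)) :=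
        mul_le_mul_of_nonneg_left h1.le hpos.le
      have h3 : (2 : ℝ) ^ (-(k : ℝ) * γ) * (2 * ((2 : ℝ) ^ ((k : ℝ) * γ - (s : ℝ) + 1) * α))
          = 2 * ((2 : ℝ) ^ (-(s : ℝ) + 1) * α) := by
        rw [← hexp]; ring
      have h4 : (2 : ℝ) ^ (-(s : ℝ) + 1) = (2 : ℝ) ^ (-(s : ℝ)) * 2 := by
        rw [Real.rpow_add two_pos, Real.rpow_one]
      rw [h3, h4] at h2
      linarith
    calc ∑' x, A k x ≤ C₀ ^ 2 * (2 : ℝ) ^ (-(k : ℝ) * γ) * ∑' x, ‖g k x‖ ^ 2 := hconv k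
      _ ≤ C₀ ^ 2 * (2 : ℝ) ^ (-(k : ℝ) * γ) * ((2 : ℝ) ^ ((J k s : ℝ) + 1) * S k) := by
        apply mul_le_mul_of_nonneg_left (hU k)
        exact mul_nonneg (sq_nonneg _) (Real.rpow_pos_of_pos two_pos _).le
      _ = C₀ ^ 2 * ((2 : ℝ) ^ (-(k : ℝ) * γ) * (2 : ℝ) ^ ((J k s : ℝ) + 1)) * S k := by ring
      _ ≤ C₀ ^ 2 * (4 * (2 : ℝ) ^ (-(s : ℝ)) * α) * S k := by
        apply mul_le_mul_of_nonneg_right _ (hS0 k)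
        exact mul_le_mul_of_nonneg_left hcc (sq_nonneg _)
  classical
  -- multiplicity bound: for each x at most N values of k can see x
  have hmult : ∀ x : G, ∑ k ∈ Finset.range K,
      (if (2 : ℝ) ^ (J k s) ≤ ‖f x‖ ∧ ‖f x‖ < (2 : ℝ) ^ (J k s + 1) then ‖f x‖ else 0)
      ≤ (N : ℝ) * ‖f x‖ := by
    intro x
    set V := (Finset.range K).filter
      (fun k => (2 : ℝ) ^ (J k s) ≤ ‖f x‖ ∧ ‖f x‖ < (2 : ℝ) ^ (J k s + 1)) with hVdef
    have hsum : ∑ k ∈ Finset.range K,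
        (if (2 : ℝ) ^ (J k s) ≤ ‖f x‖ ∧ ‖f x‖ < (2 : ℝ) ^ (J k s + 1) then ‖f x‖ else 0)
        = (V.card : ℝ) * ‖f x‖ := by
      rw [hVdef, ← Finset.sum_filter, Finset.sum_const, nsmul_eq_mul]
    rw [hsum]
    apply mul_le_mul_of_nonneg_right _ (norm_nonneg _)
    have hcard : V.card ≤ N := by
      by_cases hV0 : V.Nonempty
      · have hpair : ∀ k ∈ V, ∀ m ∈ V, k ≤ m + ⌈2 / γ⌉₊ := by
          intro k hk m hm
          simp only [hVdef, Finset.mem_filter] at hk hm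
          have a1 : (2 : ℝ) ^ ((k : ℝ) * γ - (s : ℝ)) * α ≤ ‖f x‖ := (hJ1 k).trans hk.2.1
          have a2 : ‖f x‖ < 2 * ((2 : ℝ) ^ ((m : ℝ) * γ - (s : ℝ) + 1) * α) := by
            have b1 := hm.2.2
            have b2 : (2 : ℝ) ^ (J m s + 1) ≤ (2 : ℝ) ^ ((J m s : ℝ) + 1) := by
              rw [show ((J m s : ℝ) + 1) = ((J m s + 1 : ℤ) : ℝ) by push_cast; ring,
                Real.rpow_intCast 2 (J m s + 1)]
            exact (b1.trans_le b2).trans (hJ2' m)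
          have a3 : (2 : ℝ) ^ ((k : ℝ) * γ - (s : ℝ)) < (2 : ℝ) ^ ((m : ℝ) * γ - (s : ℝ) + 2) := by
            have : (2 : ℝ) ^ ((k : ℝ) * γ - (s : ℝ)) * α
                < 2 * ((2 : ℝ) ^ ((m : ℝ) * γ - (s : ℝ) + 1) * α) := a1.trans_lt a2
            have h2 : (2 : ℝ) ^ ((m : ℝ) * γ - (s : ℝ) + 2)
                = 2 * (2 : ℝ) ^ ((m : ℝ) * γ - (s : ℝ) + 1) := by
              rw [show ((m : ℝ) * γ - (s : ℝ) + 2) = ((m : ℝ) * γ - (s : ℝ) + 1) + 1 by ring,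
                Real.rpow_add two_pos, Real.rpow_one]
              ring
            rw [h2]
            have hα' := hα
            nlinarith
          have a4 : (k : ℝ) * γ - (s : ℝ) < (m : ℝ) * γ - (s : ℝ) + 2 :=
            (Real.rpow_lt_rpow_left_iff one_lt_two).1 a3
          have a5 : (k : ℝ) < (m : ℝ) + 2 / γ := by
            have h1 : ((k : ℝ) - m) * γ < 2 := by nlinarith
            have h2 : (k : ℝ) - m < 2 / γ := (lt_div_iff₀ hγ).2 h1
            linarith
          have a6 : (k : ℝ) < (m : ℝ) + (⌈2 / γ⌉₊ : ℝ) + 1 := by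
            have := Nat.le_ceil (2 / γ)
            linarith
          have : (k : ℕ) < m + ⌈2 / γ⌉₊ + 1 := by exact_mod_cast (by push_cast; linarith : (k:ℝ) < ((m + ⌈2 / γ⌉₊ + 1 : ℕ) : ℝ))
          omega
        set m := V.min' hV0 with hmdef
        have hmV : m ∈ V := Finset.min'_mem _ _
        have hsub : V ⊆ Finset.Icc m (m + ⌈2 / γ⌉₊) := by
          intro k hk
          rw [Finset.mem_Icc]
          exact ⟨Finset.min'_le _ _ hk, hpair k hk m hmV⟩
        calc V.card ≤ (Finset.Icc m (m + ⌈2 / γ⌉₊)).card := Finset.card_le_card hsub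
          _ = ⌈2 / γ⌉₊ + 1 := by rw [Nat.card_Icc]; omega
          _ = N := hNdef.symm
      · rw [Finset.not_nonempty_iff_eq_empty.1 hV0]
        simp [hNdef]
    exact_mod_cast hcard
  -- sum of level-set masses
  have hsum_S : ∑ k ∈ Finset.range K, S k ≤ (N : ℝ) * M := by
    have e1 : ∑ k ∈ Finset.range K, S k = ∑' x : G, ∑ k ∈ Finset.range K,
        (if (2 : ℝ) ^ (J k s) ≤ ‖f x‖ ∧ ‖f x‖ < (2 : ℝ) ^ (J k s + 1) then ‖f x‖ else 0) :=
      (Summable.tsum_finsetSum fun k _ => hSsummable k).symm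
    rw [e1]
    calc _ ≤ ∑' x : G, (N : ℝ) * ‖f x‖ :=
        Summable.tsum_le_tsum hmult (summable_sum fun k _ => hSsummable k) (hf1.mul_left _)
      _ = (N : ℝ) * M := tsum_mul_left
  -- assembly
  by_cases hsumA : Summable (fun x : G => ∑ k ∈ Finset.range K, A k x)
  · have hAsummable : ∀ k ∈ Finset.range K, Summable (fun x : G => A k x) := by
      intro k hk
      exact Summable.of_nonneg_of_le (fun x => hA0 k x)
        (fun x => Finset.single_le_sum (fun i _ => hA0 i x) hk) hsumA
    have hC0 : 0 ≤ C₀ ^ 2 * (4 * (2 : ℝ) ^ (-(s : ℝ)) * α) :=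
      mul_nonneg (sq_nonneg _)
        (mul_nonneg (by positivity) hα.le)
    calc ∑' x : G, ∑' k : ℕ, A k x = ∑' x : G, ∑ k ∈ Finset.range K, A k x := tsum_congr hinner
      _ = ∑ k ∈ Finset.range K, ∑' x : G, A k x := Summable.tsum_finsetSum hAsummable
      _ ≤ ∑ k ∈ Finset.range K, C₀ ^ 2 * (4 * (2 : ℝ) ^ (-(s : ℝ)) * α) * S k :=
        Finset.sum_le_sum fun k _ => hkey k
      _ = C₀ ^ 2 * (4 * (2 : ℝ) ^ (-(s : ℝ)) * α) * ∑ k ∈ Finset.range K, S k := by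
        rw [Finset.mul_sum]
      _ ≤ C₀ ^ 2 * (4 * (2 : ℝ) ^ (-(s : ℝ)) * α) * ((N : ℝ) * M) :=
        mul_le_mul_of_nonneg_left hsum_S hC0
      _ = 4 * C₀ ^ 2 * (N : ℝ) * (2 : ℝ) ^ (-(s : ℝ)) * α * M := by ring
  · rw [show (∑' x : G, ∑' k : ℕ, A k x) = ∑' x : G, ∑ k ∈ Finset.range K, A k x from
      tsum_congr hinner, tsum_eq_zero_of_not_summable hsumA]
    apply mul_nonneg (mul_nonneg (mul_nonneg _ (Real.rpow_pos_of_pos two_pos _).le) hα.le) hM0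
    positivity
end

section
/- Let (n_ν : ν ∈ ℕ) be a strictly increasing sequence of nonnegative integers, let Mf(x) = sup_{N≥1} N^{−1} |Σ_{ν=1}^N f(x + n_ν)|, and for k ≥ 0 let A_k f(x) = 2^{−k} Σ_{ν=2^k+1}^{2^{k+1}} f(x + n_ν). Then M is of weak type (1,1) on ℤ if and only if the maximal operator f ↦ sup_{k≥0} |A_k f| is of weak type (1,1) on ℤ. -/
/-!
Write `S_N = ∑_{ν < N} f (x + n_ν)`. A dyadic block is the difference `S_{2^{k+1}} - S_{2^k}`, so a
large dyadic average forces a large partial average at `N = 2^k` or `N = 2^{k+1}`. Conversely, for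
`f ≥ 0` the sum `S_N` with `2^k ≤ N < 2^{k+1}` is at most `S_{2^{k+1}}`, which splits into the
single term `f (x + n_0)` and the dyadic blocks of index `≤ k`; if all of them are small on average,
so is `S_N / N`. Replacing `f` by `|f|` and controlling the single term by Chebyshev's inequality
gives the converse.
-/

open Finset

section PartialSums

variable (a : ℕ → ℝ)

lemma exists_avg_gt_of_dyadic_avg_gt {α : ℝ} {k : ℕ}
    (h : α < (2 ^ k : ℝ)⁻¹ * |∑ ν ∈ Ico (2 ^ k) (2 ^ (k + 1)), a ν|) :
    ∃ N : ℕ, 1 ≤ N ∧ α / 3 < (N : ℝ)⁻¹ * |∑ ν ∈ range N, a ν| := by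
  by_contra! hle
  have hS : ∀ m : ℕ, |∑ ν ∈ range (2 ^ m), a ν| ≤ α / 3 * 2 ^ m := fun m => by
    have hm := hle (2 ^ m) Nat.one_le_two_pow
    rwa [Nat.cast_pow, Nat.cast_ofNat, inv_mul_le_iff₀ (by positivity), mul_comm] at hm
  have hblock : ∑ ν ∈ Ico (2 ^ k) (2 ^ (k + 1)), a ν
      = ∑ ν ∈ range (2 ^ (k + 1)), a ν - ∑ ν ∈ range (2 ^ k), a ν :=
    sum_Ico_eq_sub _ (Nat.pow_le_pow_right two_pos k.le_succ)
  rw [lt_inv_mul_iff₀ (by positivity), hblock] at h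
  have htri := abs_sub (∑ ν ∈ range (2 ^ (k + 1)), a ν) (∑ ν ∈ range (2 ^ k), a ν)
  have hlong := hS (k + 1)
  rw [pow_succ (2 : ℝ) k] at hlong
  linarith [hS k]

variable {a} {β : ℝ}

lemma sum_range_two_pow_le (h₀ : a 0 ≤ β)
    (hblock : ∀ j : ℕ, (2 ^ j : ℝ)⁻¹ * |∑ ν ∈ Ico (2 ^ j) (2 ^ (j + 1)), a ν| ≤ β) (k : ℕ) :
    ∑ ν ∈ range (2 ^ k), a ν ≤ β * 2 ^ k := by
  induction k with
  | zero => simpa using h₀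
  | succ k ih =>
    have hk := hblock k
    rw [inv_mul_le_iff₀ (by positivity)] at hk
    rw [← sum_range_add_sum_Ico _ (Nat.pow_le_pow_right two_pos k.le_succ), pow_succ (2 : ℝ) k]
    linarith [le_abs_self (∑ ν ∈ Ico (2 ^ k) (2 ^ (k + 1)), a ν)]

lemma avg_le_of_dyadic_avg_le (ha : ∀ ν, 0 ≤ a ν) (h₀ : a 0 ≤ β)
    (hblock : ∀ j : ℕ, (2 ^ j : ℝ)⁻¹ * |∑ ν ∈ Ico (2 ^ j) (2 ^ (j + 1)), a ν| ≤ β)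
    {N : ℕ} (hN : 1 ≤ N) :
    (N : ℝ)⁻¹ * ∑ ν ∈ range N, a ν ≤ 2 * β := by
  set k := Nat.log 2 N
  have hkN : (2 ^ k : ℝ) ≤ N := by exact_mod_cast Nat.pow_log_le_self 2 (by omega)
  have hNk : N ≤ 2 ^ (k + 1) := (Nat.lt_pow_succ_log_self one_lt_two N).le
  have hβ : 0 ≤ β := (ha 0).trans h₀
  rw [inv_mul_le_iff₀ (by positivity)]
  calc ∑ ν ∈ range N, a ν ≤ ∑ ν ∈ range (2 ^ (k + 1)), a ν :=
        sum_le_sum_of_subset_of_nonneg (range_subset_range.mpr hNk) fun ν _ _ => ha ν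
    _ ≤ β * 2 ^ (k + 1) := sum_range_two_pow_le h₀ hblock (k + 1)
    _ = 2 * β * 2 ^ k := by ring
    _ ≤ N * (2 * β) := by nlinarith

end PartialSums

section WeakType

variable {G : Type*}

/-- An operator `T` is recorded through its superlevel sets: `E f α = {x | α < |T f x|}`. -/
def IsWeakTypeOneOne (E : (G → ℝ) → ℝ → Set G) : Prop :=
  ∃ C : ℝ, ∀ f : G → ℝ, Summable (fun x => |f x|) → ∀ α : ℝ, 0 < α →
    (E f α).Finite ∧ ((E f α).ncard : ℝ) ≤ C * α⁻¹ * ∑' x, |f x|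

lemma isWeakTypeOneOne_iff (E : (G → ℝ) → ℝ → Set G) :
    IsWeakTypeOneOne E ↔ ∃ C : ℝ, ∀ f : G → ℝ, Summable (fun x => |f x|) → ∀ α : ℝ, 0 < α →
      ∃ hfin : (E f α).Finite, (hfin.toFinset.card : ℝ) ≤ C * α⁻¹ * ∑' x, |f x| := by
  refine exists_congr fun C => forall_congr' fun f => forall_congr' fun _ =>
    forall_congr' fun α => forall_congr' fun _ => ?_
  exact ⟨fun ⟨hfin, h⟩ => ⟨hfin, by rwa [← Set.ncard_eq_toFinset_card _ hfin]⟩,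
    fun ⟨hfin, h⟩ => ⟨hfin, by rwa [Set.ncard_eq_toFinset_card _ hfin]⟩⟩

lemma finite_and_ncard_superlevel_le {ι : Type*} {g : ι → ℝ} (hg : Summable g)
    (hg₀ : ∀ i, 0 ≤ g i) {β : ℝ} (hβ : 0 < β) :
    {i | β < g i}.Finite ∧ ({i | β < g i}.ncard : ℝ) ≤ β⁻¹ * ∑' i, g i := by
  have hfin : {i | β < g i}.Finite :=
    (Filter.mem_cofinite.mp (hg.tendsto_cofinite_zero (Iio_mem_nhds hβ))).subset
      fun i (hi : β < g i) (hlt : g i < β) => lt_asymm hi hlt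
  refine ⟨hfin, ?_⟩
  rw [Set.ncard_eq_toFinset_card _ hfin, inv_mul_eq_div, le_div_iff₀ hβ]
  calc (hfin.toFinset.card : ℝ) * β = ∑ _i ∈ hfin.toFinset, β := by
        rw [sum_const, nsmul_eq_mul]
    _ ≤ ∑ i ∈ hfin.toFinset, g i := sum_le_sum fun i hi => (hfin.mem_toFinset.mp hi).le
    _ ≤ ∑' i, g i := hg.sum_le_tsum _ fun i _ => hg₀ i

lemma isWeakTypeOneOne_translate [AddGroup G] (c : G) :
    IsWeakTypeOneOne fun f α => {x | α < |f (x + c)|} := by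
  refine ⟨1, fun f hf α hα => ?_⟩
  have hsum : Summable fun x => |f (x + c)| := (Equiv.addRight c).summable_iff.mpr hf
  have htsum : ∑' x, |f (x + c)| = ∑' x, |f x| := (Equiv.addRight c).tsum_eq fun x => |f x|
  rw [one_mul, ← htsum]
  exact finite_and_ncard_superlevel_le hsum (fun _ => abs_nonneg _) hα

namespace IsWeakTypeOneOne

variable {E E' : (G → ℝ) → ℝ → Set G}

lemma comp_abs (h : IsWeakTypeOneOne E) : IsWeakTypeOneOne fun f => E fun x => |f x| := by
  obtain ⟨C, hC⟩ := h
  refine ⟨C, fun f hf α hα => ?_⟩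
  simpa only [abs_abs] using hC (fun x => |f x|) (by simpa only [abs_abs] using hf) α hα

lemma union (h : IsWeakTypeOneOne E) (h' : IsWeakTypeOneOne E') :
    IsWeakTypeOneOne fun f α => E f α ∪ E' f α := by
  obtain ⟨C, hC⟩ := h
  obtain ⟨C', hC'⟩ := h'
  refine ⟨C + C', fun f hf α hα => ?_⟩
  obtain ⟨hfin, hcard⟩ := hC f hf α hα
  obtain ⟨hfin', hcard'⟩ := hC' f hf α hα
  refine ⟨hfin.union hfin', ?_⟩
  calc ((E f α ∪ E' f α).ncard : ℝ) ≤ (E f α).ncard + (E' f α).ncard := by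
        exact_mod_cast Set.ncard_union_le _ _
    _ ≤ (C + C') * α⁻¹ * ∑' x, |f x| := by linarith

lemma of_subset (h : IsWeakTypeOneOne E) {c : ℝ} (hc : 0 < c)
    (hsub : ∀ f α, E' f α ⊆ E f (α / c)) : IsWeakTypeOneOne E' := by
  obtain ⟨C, hC⟩ := h
  refine ⟨c * C, fun f hf α hα => ?_⟩
  obtain ⟨hfin, hcard⟩ := hC f hf (α / c) (by positivity)
  refine ⟨hfin.subset (hsub f α), ?_⟩
  calc ((E' f α).ncard : ℝ) ≤ (E f (α / c)).ncard := by
        exact_mod_cast Set.ncard_le_ncard (hsub f α) hfin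
    _ ≤ C * (α / c)⁻¹ * ∑' x, |f x| := hcard
    _ = c * C * α⁻¹ * ∑' x, |f x| := by rw [inv_div, div_eq_mul_inv]; ring

end IsWeakTypeOneOne

variable [AddGroup G] (n : ℕ → G)

def maximalAvgSuperlevel (f : G → ℝ) (α : ℝ) : Set G :=
  {x | ∃ N : ℕ, 1 ≤ N ∧ α < (N : ℝ)⁻¹ * |∑ ν ∈ range N, f (x + n ν)|}

def dyadicAvgSuperlevel (f : G → ℝ) (α : ℝ) : Set G :=
  {x | ∃ k : ℕ, α < (2 ^ k : ℝ)⁻¹ * |∑ ν ∈ Ico (2 ^ k) (2 ^ (k + 1)), f (x + n ν)|}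

lemma dyadicAvgSuperlevel_subset (f : G → ℝ) (α : ℝ) :
    dyadicAvgSuperlevel n f α ⊆ maximalAvgSuperlevel n f (α / 3) := fun _ ⟨_, hk⟩ =>
  exists_avg_gt_of_dyadic_avg_gt _ hk

lemma maximalAvgSuperlevel_subset (f : G → ℝ) (α : ℝ) :
    maximalAvgSuperlevel n f α ⊆
      dyadicAvgSuperlevel n (fun x => |f x|) (α / 2) ∪ {x | α / 2 < |f (x + n 0)|} := by
  rintro x ⟨N, hN, hα⟩
  by_contra hx
  simp only [dyadicAvgSuperlevel, Set.mem_union, Set.mem_ofPred_eq, not_or, not_exists,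
    not_lt] at hx
  have hle := avg_le_of_dyadic_avg_le (fun ν => abs_nonneg (f (x + n ν))) hx.2 hx.1 hN
  have htri := abs_sum_le_sum_abs (fun ν => f (x + n ν)) (range N)
  have havg : (N : ℝ)⁻¹ * |∑ ν ∈ range N, f (x + n ν)|
      ≤ (N : ℝ)⁻¹ * ∑ ν ∈ range N, |f (x + n ν)| :=
    mul_le_mul_of_nonneg_left htri (by positivity)
  linarith

theorem isWeakTypeOneOne_maximal_iff_dyadic :
    IsWeakTypeOneOne (maximalAvgSuperlevel n) ↔ IsWeakTypeOneOne (dyadicAvgSuperlevel n) :=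
  ⟨fun h => h.of_subset three_pos (dyadicAvgSuperlevel_subset n),
    fun h => (h.comp_abs.union (isWeakTypeOneOne_translate (n 0))).of_subset two_pos
      (maximalAvgSuperlevel_subset n)⟩

end WeakType

theorem weak_type_iff_dyadic_weak_type_general (n : ℕ → ℕ) :
    (∃ C : ℝ, ∀ f : ℤ → ℝ, Summable (fun x => |f x|) → ∀ α : ℝ, 0 < α →
      ∃ hfin : {x : ℤ | ∃ N : ℕ, 1 ≤ N ∧
          α < ((N : ℝ))⁻¹ * |∑ ν ∈ Finset.range N, f (x + n ν)|}.Finite,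
        (hfin.toFinset.card : ℝ) ≤ C * α⁻¹ * ∑' x, |f x|)
    ↔
    (∃ C : ℝ, ∀ f : ℤ → ℝ, Summable (fun x => |f x|) → ∀ α : ℝ, 0 < α →
      ∃ hfin : {x : ℤ | ∃ k : ℕ,
          α < ((2 ^ k : ℝ))⁻¹ * |∑ ν ∈ Finset.Ico (2 ^ k) (2 ^ (k + 1)), f (x + n ν)|}.Finite,
        (hfin.toFinset.card : ℝ) ≤ C * α⁻¹ * ∑' x, |f x|) :=
  (isWeakTypeOneOne_iff (maximalAvgSuperlevel fun ν => (n ν : ℤ))).symm.trans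
    ((isWeakTypeOneOne_maximal_iff_dyadic _).trans (isWeakTypeOneOne_iff _))

/-- **Lemma (reduction to dyadic averages).**
Let `(n ν)` be a strictly increasing sequence of nonnegative integers (0-indexed, so
`n (ν-1)` is the paper's `n_ν`), `Mf(x) = sup_{N ≥ 1} N⁻¹ |∑_{ν=1}^N f (x + n_ν)|`,
and for `k ≥ 0` let `A_k f (x) = 2⁻ᵏ ∑_{ν = 2^k + 1}^{2^(k+1)} f (x + n_ν)`
(0-indexed: `ν ∈ [2^k, 2^(k+1))`).  Then `M` is of weak type (1,1) on `ℤ` iff the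
maximal operator `f ↦ sup_k |A_k f|` is of weak type (1,1) on `ℤ`. -/
theorem weak_type_iff_dyadic_weak_type (n : ℕ → ℕ) (hmono : StrictMono n) :
    (∃ C : ℝ, ∀ f : ℤ → ℝ, Summable (fun x => |f x|) → ∀ α : ℝ, 0 < α →
      ∃ hfin : {x : ℤ | ∃ N : ℕ, 1 ≤ N ∧
          α < ((N : ℝ))⁻¹ * |∑ ν ∈ Finset.range N, f (x + n ν)|}.Finite,
        (hfin.toFinset.card : ℝ) ≤ C * α⁻¹ * ∑' x, |f x|)
    ↔
    (∃ C : ℝ, ∀ f : ℤ → ℝ, Summable (fun x => |f x|) → ∀ α : ℝ, 0 < α →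
      ∃ hfin : {x : ℤ | ∃ k : ℕ,
          α < ((2 ^ k : ℝ))⁻¹ * |∑ ν ∈ Finset.Ico (2 ^ k) (2 ^ (k + 1)), f (x + n ν)|}.Finite,
        (hfin.toFinset.card : ℝ) ≤ C * α⁻¹ * ∑' x, |f x|) :=
  weak_type_iff_dyadic_weak_type_general n
end

section
/- Let N ≥ 2 be an integer, let Φ : ℤ → ℂ be N-periodic, and let a ∈ ℂ satisfy a^N = 1 and a ≠ 1. Then for any integer n₀, | Σ_{n=n₀}^{n₀+N−1} Φ(n) a^n | ≤ |a − 1|^{−2} Σ_{n=n₀}^{n₀+N−1} |Φ(n+2) − 2Φ(n+1) + Φ(n)|. In particular, for Φ 3p-periodic and ξ ∈ {1,…,3p−1}, | Σ_{n=−p}^{2p−1} Φ(n) e^{−2πi n ξ/3p} | ≤ |e^{−2πi ξ/3p} − 1|^{−2} ‖Δ²Φ‖_{ℓ¹([−p,2p−1])}, where ΔΦ(n) = Φ(n+1) − Φ(n). -/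
/-!
Because `aⁿ` is `N`-periodic, shifting the summation window by one step shows that summing the
forward difference `ΔΦ` against `aⁿ` multiplies the sum `S = ∑ Φ(n) aⁿ` by `a⁻¹ - 1`.
Iterating, `a² ∑ Δ²Φ(n) aⁿ = (1 - a)² S`, and since `‖a‖ = 1` the triangle inequality gives the
bound. The second claim is the case `a = exp(-2πiξ/3p)`, a nontrivial `3p`-th root of unity
since `0 < ξ < 3p`.
-/

open Finset Function fwdDiff

theorem sum_Icc_add_sub_one_eq_sum_range {M : Type*} [AddCommMonoid M] (f : ℤ → M)
    (n₀ : ℤ) (N : ℕ) :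
    ∑ n ∈ Icc n₀ (n₀ + N - 1), f n = ∑ k ∈ range N, f (n₀ + k) := by
  rw [Int.Icc_eq_finset_map, sum_map, show (n₀ + N - 1 + 1 - n₀).toNat = N by omega]
  rfl

theorem Function.Periodic.sum_Icc_comp_add_one {M : Type*} [AddCommMonoid M] {f : ℤ → M}
    {N : ℕ} (hf : Periodic f N) (n₀ : ℤ) :
    ∑ n ∈ Icc n₀ (n₀ + N - 1), f (n + 1) = ∑ n ∈ Icc n₀ (n₀ + N - 1), f n := by
  simp only [sum_Icc_add_sub_one_eq_sum_range]
  cases N with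
  | zero => simp
  | succ N =>
    rw [sum_range_succ, sum_range_succ', add_assoc, ← Nat.cast_add_one, hf, Nat.cast_zero,
      add_zero]
    simp only [Nat.cast_add_one, add_assoc]

theorem Function.Periodic.fwdDiff_iter {α G : Type*} [AddCommMonoid α] [AddCommGroup G]
    {f : α → G} {c : α} (hf : Periodic f c) (h : α) (k : ℕ) : Periodic ((Δ_[h])^[k] f) c := by
  intro x
  rw [← fwdDiff_iter_comp_add, funext hf]

theorem fwdDiff_iter_two_apply {R : Type*} [Ring R] (f : ℤ → R) (n : ℤ) :
    (Δ_[1])^[2] f n = f (n + 2) - 2 * f (n + 1) + f n := by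
  simp only [iterate_succ_apply', iterate_zero_apply, fwdDiff, add_assoc, one_add_one_eq_two]
  noncomm_ring

section SummationByParts

variable {K : Type*} [NormedField K] {N : ℕ} {Φ : ℤ → K} {a : K}

theorem periodic_zpow_of_pow_eq_one (ha0 : a ≠ 0) (haN : a ^ N = 1) :
    Periodic (fun n : ℤ ↦ a ^ n) N := fun n ↦ by
  simp [zpow_add₀ ha0, haN]

theorem mul_sum_fwdDiff_mul_zpow (hΦ : Periodic Φ N) (ha0 : a ≠ 0) (haN : a ^ N = 1) (n₀ : ℤ) :
    a * ∑ n ∈ Icc n₀ (n₀ + N - 1), Δ_[1] Φ n * a ^ n =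
      (1 - a) * ∑ n ∈ Icc n₀ (n₀ + N - 1), Φ n * a ^ n := by
  have hshift := (hΦ.mul (periodic_zpow_of_pow_eq_one ha0 haN)).sum_Icc_comp_add_one n₀
  simp only [Pi.mul_apply, zpow_add_one₀ ha0] at hshift
  calc a * ∑ n ∈ Icc n₀ (n₀ + N - 1), Δ_[1] Φ n * a ^ n
      = ∑ n ∈ Icc n₀ (n₀ + N - 1), Φ (n + 1) * (a ^ n * a) -
          a * ∑ n ∈ Icc n₀ (n₀ + N - 1), Φ n * a ^ n := by
        rw [mul_sum, mul_sum, ← sum_sub_distrib]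
        exact sum_congr rfl fun n _ ↦ by rw [fwdDiff]; ring
    _ = (1 - a) * ∑ n ∈ Icc n₀ (n₀ + N - 1), Φ n * a ^ n := by rw [hshift]; ring

theorem pow_mul_sum_fwdDiff_iter_mul_zpow (hΦ : Periodic Φ N) (ha0 : a ≠ 0) (haN : a ^ N = 1)
    (n₀ : ℤ) (k : ℕ) :
    a ^ k * ∑ n ∈ Icc n₀ (n₀ + N - 1), (Δ_[1])^[k] Φ n * a ^ n =
      (1 - a) ^ k * ∑ n ∈ Icc n₀ (n₀ + N - 1), Φ n * a ^ n := by
  induction k with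
  | zero => simp
  | succ k ih =>
    rw [iterate_succ_apply', pow_succ, mul_assoc,
      mul_sum_fwdDiff_mul_zpow (hΦ.fwdDiff_iter 1 k) ha0 haN, mul_left_comm, ih]
    ring

theorem norm_sum_mul_zpow_le (hN : N ≠ 0) (hΦ : Periodic Φ N) (haN : a ^ N = 1) (ha : a ≠ 1)
    (n₀ : ℤ) (k : ℕ) :
    ‖∑ n ∈ Icc n₀ (n₀ + N - 1), Φ n * a ^ n‖ ≤
      (‖a - 1‖ ^ k)⁻¹ * ∑ n ∈ Icc n₀ (n₀ + N - 1), ‖(Δ_[1])^[k] Φ n‖ := by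
  have hnorm : ‖a‖ = 1 :=
    (pow_eq_one_iff_of_nonneg (norm_nonneg a) hN).mp (by rw [← norm_pow, haN, norm_one])
  have ha0 : a ≠ 0 := norm_ne_zero_iff.mp (by rw [hnorm]; exact one_ne_zero)
  rw [le_inv_mul_iff₀ (pow_pos (norm_pos_iff.mpr (sub_ne_zero.mpr ha)) k)]
  calc ‖a - 1‖ ^ k * ‖∑ n ∈ Icc n₀ (n₀ + N - 1), Φ n * a ^ n‖
      = ‖a ^ k * ∑ n ∈ Icc n₀ (n₀ + N - 1), (Δ_[1])^[k] Φ n * a ^ n‖ := by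
        rw [pow_mul_sum_fwdDiff_iter_mul_zpow hΦ ha0 haN, norm_mul, norm_pow, norm_sub_rev]
    _ ≤ ∑ n ∈ Icc n₀ (n₀ + N - 1), ‖(Δ_[1])^[k] Φ n‖ := by
        rw [norm_mul, norm_pow, hnorm, one_pow, one_mul]
        refine (norm_sum_le _ _).trans_eq (sum_congr rfl fun n _ ↦ ?_)
        rw [norm_mul, norm_zpow, hnorm, one_zpow, mul_one]

end SummationByParts

section RootsOfUnity

open Complex Real

theorem Complex.exp_neg_two_pi_I_mul_div_eq_zpow (m : ℕ) (x : ℤ) :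
    exp (-2 * π * I * x / m) = exp (2 * π * I / m) ^ (-x) := by
  rw [← exp_int_mul]
  push_cast
  ring_nf

theorem Complex.exp_neg_two_pi_I_mul_div_ne_one {m ξ : ℕ} (hξ0 : 0 < ξ) (hξm : ξ < m) :
    exp (-2 * π * I * ξ / m) ≠ 1 := by
  rw [← Int.cast_natCast ξ, exp_neg_two_pi_I_mul_div_eq_zpow, ne_eq,
    (isPrimitiveRoot_exp m (by omega)).zpow_eq_one_iff_dvd, Int.dvd_neg, Int.natCast_dvd_natCast]
  exact fun h ↦ (Nat.eq_zero_of_dvd_of_lt h hξm).not_gt hξ0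

theorem Complex.exp_neg_two_pi_I_mul_div_pow_eq_one (ξ : ℕ) {m : ℕ} (hm : m ≠ 0) :
    exp (-2 * π * I * ξ / m) ^ m = 1 := by
  rw [← Int.cast_natCast ξ, exp_neg_two_pi_I_mul_div_eq_zpow, ← zpow_natCast, ← zpow_mul,
    (isPrimitiveRoot_exp m hm).zpow_eq_one_iff_dvd]
  exact dvd_mul_left _ _

theorem Complex.exp_neg_two_pi_I_mul_mul_div (ξ m : ℕ) (n : ℤ) :
    exp (-2 * π * I * ξ * n / m) = exp (-2 * π * I * ξ / m) ^ n := by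
  rw [← exp_int_mul]
  ring_nf

theorem norm_sum_mul_exp_le {m : ℕ} {Φ : ℤ → ℂ} (hΦ : Periodic Φ m) {ξ : ℕ} (hξ0 : 0 < ξ)
    (hξm : ξ < m) (n₀ : ℤ) (k : ℕ) :
    ‖∑ n ∈ Icc n₀ (n₀ + m - 1), Φ n * exp (-2 * π * I * ξ * n / m)‖ ≤
      (‖exp (-2 * π * I * ξ / m) - 1‖ ^ k)⁻¹ *
        ∑ n ∈ Icc n₀ (n₀ + m - 1), ‖(Δ_[1])^[k] Φ n‖ := by
  simp only [exp_neg_two_pi_I_mul_mul_div]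
  exact norm_sum_mul_zpow_le (by omega) hΦ (exp_neg_two_pi_I_mul_div_pow_eq_one ξ (by omega))
    (exp_neg_two_pi_I_mul_div_ne_one hξ0 hξm) n₀ k

end RootsOfUnity

/-- **Lemma (double summation by parts).**
Let `N ≥ 2`, let `Φ : ℤ → ℂ` be `N`-periodic, and let `a ∈ ℂ` satisfy `a^N = 1`,
`a ≠ 1`.  Then for any `n₀`,
`|∑_{n=n₀}^{n₀+N-1} Φ(n) aⁿ| ≤ |a-1|⁻² ∑_{n=n₀}^{n₀+N-1} |Φ(n+2) - 2Φ(n+1) + Φ(n)|`.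
In particular, for `Φ` `3p`-periodic and `ξ ∈ {1,…,3p-1}`,
`|∑_{n=-p}^{2p-1} Φ(n) e^{-2πinξ/3p}| ≤ |e^{-2πiξ/3p} - 1|⁻² ‖Δ²Φ‖_{ℓ¹([-p,2p-1])}`. -/
theorem abel_summation_second_difference_bound
    (N : ℕ) (hN : 2 ≤ N) (Φ : ℤ → ℂ) (hper : ∀ n : ℤ, Φ (n + N) = Φ n)
    (a : ℂ) (haN : a ^ N = 1) (ha : a ≠ 1) (n₀ : ℤ) :
    (‖∑ n ∈ Finset.Icc n₀ (n₀ + N - 1), Φ n * a ^ n‖ ≤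
      (‖a - 1‖ ^ 2)⁻¹ *
        ∑ n ∈ Finset.Icc n₀ (n₀ + N - 1), ‖Φ (n + 2) - 2 * Φ (n + 1) + Φ n‖) ∧
    ∀ p : ℕ, 0 < p → ∀ Ψ : ℤ → ℂ, (∀ n : ℤ, Ψ (n + 3 * p) = Ψ n) →
      ∀ ξ : ℕ, 1 ≤ ξ → ξ ≤ 3 * p - 1 →
      ‖∑ n ∈ Finset.Icc (-(p : ℤ)) (2 * (p : ℤ) - 1),
          Ψ n * Complex.exp (-2 * Real.pi * Complex.I * (ξ : ℂ) * (n : ℂ) / (3 * (p : ℂ)))‖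
        ≤ (‖Complex.exp (-2 * Real.pi * Complex.I * (ξ : ℂ) / (3 * (p : ℂ))) - 1‖ ^ 2)⁻¹ *
          ∑ n ∈ Finset.Icc (-(p : ℤ)) (2 * (p : ℤ) - 1),
            ‖Ψ (n + 2) - 2 * Ψ (n + 1) + Ψ n‖ := by
  simp only [← fwdDiff_iter_two_apply]
  refine ⟨norm_sum_mul_zpow_le (by omega) hper haN ha n₀ 2, fun p _ Ψ hΨ ξ hξ1 hξ2 ↦ ?_⟩
  have hΨ' : Periodic Ψ (3 * p : ℕ) := by exact_mod_cast hΨ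
  have h := norm_sum_mul_exp_le hΨ' hξ1 (by omega) (-p) 2
  rw [show -(p : ℤ) + (3 * p : ℕ) - 1 = 2 * p - 1 by push_cast; ring] at h
  exact_mod_cast h
end

section
/- Let d ≥ 1 be an integer and let p be an odd prime. For every nonzero ξ = (ξ', ξ_{d+1}) ∈ (ℤ/pℤ)^d × (ℤ/pℤ): p^{−d} | Σ_{n ∈ [0,p−1]^d} e^{−2πi ( n·ξ' + |n|² ξ_{d+1} ) / p } | ≤ p^{−d/2}, where |n|² = Σ_{i=1}^d n_i² and n·ξ' = Σ_{i=1}^d n_i ξ'_i, all computed modulo p using representatives in {0,…,p−1}. -/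
/-!
The sum factors over the coordinates into one-dimensional sums
`∑_{y ∈ 𝔽_p} ψ(a y² + b y)` for the standard additive character `ψ` of `ℤ/pℤ`.
If `a ≠ 0`, Weyl differencing gives `|∑ ψ(a y² + b y)|² = ∑_h ψ(a h² + b h) ∑_y ψ(2 a h y) = p`,
since the inner sum vanishes unless `2 a h = 0`, i.e. `h = 0` as `p` is odd; so the product has absolute
value `p^{d/2}`. If `a = 0`, then some `b = ξ'_j ≠ 0` and that factor is a complete sum of a
nontrivial character, hence zero.
-/

open Finset Complex

namespace AddChar

lemma map_sum_eq_prod {A M ι : Type*} [AddCommMonoid A] [CommMonoid M] (ψ : AddChar A M)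
    (s : Finset ι) (f : ι → A) : ψ (∑ i ∈ s, f i) = ∏ i ∈ s, ψ (f i) :=
  map_prod ψ.toMonoidHom (fun i => Multiplicative.ofAdd (f i)) s

variable {F : Type*} [Field F] [Fintype F] {ψ : AddChar F ℂ}

lemma norm_sq_sum_quadratic (hF : ringChar F ≠ 2) (hψ : ψ.IsPrimitive) {a : F} (ha : a ≠ 0)
    (b : F) : ‖∑ x, ψ (a * x ^ 2 + b * x)‖ ^ 2 = Fintype.card F := by
  classical
  set f : F → F := fun x => a * x ^ 2 + b * x
  have hdiff : ∀ y h, f (y + h) - f y = f h + y * (2 * a * h) := fun y h => by ring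
  have hslope : ∀ h, 2 * a * h = 0 ↔ h = 0 := by simp [Ring.two_ne_zero hF, ha]
  have hconj : ∀ x, starRingEnd ℂ (ψ x) = ψ (-x) := fun x => by
    rw [map_neg_eq_inv, inv_eq_conj (ψ.norm_apply x)]
  suffices ((‖∑ x, ψ (f x)‖ ^ 2 : ℝ) : ℂ) = Fintype.card F by exact_mod_cast this
  calc ((‖∑ x, ψ (f x)‖ ^ 2 : ℝ) : ℂ)
      = ∑ y, ∑ x, ψ (f x - f y) := by
        rw [ofReal_pow, ← mul_conj', map_sum, sum_mul_sum, sum_comm]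
        simp_rw [hconj, ← map_add_eq_mul, ← sub_eq_add_neg]
    _ = ∑ y, ∑ h, ψ (f h) * ψ (y * (2 * a * h)) := by
        refine sum_congr rfl fun y _ => ?_
        refine (Fintype.sum_equiv (Equiv.addLeft y) _ _ fun h => ?_).symm
        rw [← map_add_eq_mul, ← hdiff, Equiv.coe_addLeft]
    _ = ∑ h, ψ (f h) * ∑ y, ψ (y * (2 * a * h)) := by
        rw [sum_comm]
        simp_rw [mul_sum]
    _ = Fintype.card F := by
        simp_rw [sum_mulShift _ hψ, hslope]
        simp [f]

lemma norm_sum_quadratic (hF : ringChar F ≠ 2) (hψ : ψ.IsPrimitive) {a : F} (ha : a ≠ 0)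
    (b : F) : ‖∑ x, ψ (a * x ^ 2 + b * x)‖ = √(Fintype.card F) := by
  rw [← norm_sq_sum_quadratic hF hψ ha b, Real.sqrt_sq (norm_nonneg _)]

end AddChar

namespace ZMod

lemma sum_range_natCast {M : Type*} [AddCommMonoid M] (n : ℕ) [NeZero n] (f : ZMod n → M) :
    ∑ x ∈ range n, f x = ∑ y, f y :=
  sum_nbij' (↑) val (fun _ _ => mem_univ _) (fun y _ => mem_range.2 y.val_lt)
    (fun _ hx => val_cast_of_lt (mem_range.1 hx)) (fun y _ => natCast_zmod_val y) fun _ _ => rfl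

lemma stdAddChar_neg_natCast {N : ℕ} [NeZero N] (j : ℕ) :
    stdAddChar (-(j : ZMod N)) = exp (-2 * Real.pi * I * j / N) := by
  have := stdAddChar_coe (N := N) (-(j : ℤ))
  push_cast at this
  rw [this]
  ring_nf

end ZMod

lemma sum_piFinset_exp_eq_prod (d p : ℕ) [NeZero p] (ξ' : Fin d → ZMod p) (ξd : ZMod p) :
    ∑ n ∈ Fintype.piFinset (fun _ : Fin d => Finset.range p),
        Complex.exp (-2 * Real.pi * Complex.I *
          ((((∑ i, n i * ((ξ' i).val)) + (∑ i, (n i) ^ 2) * ξd.val : ℕ)) : ℂ) / (p : ℂ))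
      = ∏ i, ∑ y, ZMod.stdAddChar (-ξd * y ^ 2 + -ξ' i * y) := by
  calc _ = ∑ n ∈ Fintype.piFinset (fun _ : Fin d => Finset.range p),
          ∏ i, ZMod.stdAddChar (-ξd * (n i : ZMod p) ^ 2 + -ξ' i * (n i : ZMod p)) := by
        refine sum_congr rfl fun n _ => ?_
        rw [← ZMod.stdAddChar_neg_natCast, ← AddChar.map_sum_eq_prod]
        push_cast [ZMod.natCast_zmod_val, sum_mul, ← sum_add_distrib, ← sum_neg_distrib]
        exact congrArg _ (sum_congr rfl fun i _ => by ring)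
    _ = ∏ i, ∑ x ∈ range p, ZMod.stdAddChar (-ξd * (x : ZMod p) ^ 2 + -ξ' i * (x : ZMod p)) :=
        by rw [prod_univ_sum]
    _ = _ := prod_congr rfl fun i _ =>
        ZMod.sum_range_natCast p fun y => ZMod.stdAddChar (-ξd * y ^ 2 + -ξ' i * y)

theorem gauss_sum_power_bound_general (d p : ℕ) (hp : p.Prime) (hodd : Odd p)
    (ξ' : Fin d → ZMod p) (ξd : ZMod p) (hξ : ¬(ξ' = 0 ∧ ξd = 0)) :
    ((p : ℝ) ^ d)⁻¹ *
        ‖∑ n ∈ Fintype.piFinset (fun _ : Fin d => Finset.range p),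
            Complex.exp (-2 * Real.pi * Complex.I *
              ((((∑ i, n i * ((ξ' i).val)) + (∑ i, (n i) ^ 2) * ξd.val : ℕ)) : ℂ) / (p : ℂ))‖
      ≤ ((Real.sqrt p) ^ d)⁻¹ := by
  have := Fact.mk hp
  have hchar : ringChar (ZMod p) ≠ 2 := by
    rw [ZMod.ringChar_zmod_n]
    rintro rfl
    norm_num at hodd
  rw [sum_piFinset_exp_eq_prod, norm_prod]
  by_cases hξd : ξd = 0
  · obtain ⟨j, hj⟩ : ∃ j, ξ' j ≠ 0 := by
      by_contra! h
      exact hξ ⟨funext h, hξd⟩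
    have hlinear : ∑ y, ZMod.stdAddChar (-ξd * y ^ 2 + -ξ' j * y) = 0 := by
      simpa [hξd, mul_comm, hj] using AddChar.sum_mulShift (-ξ' j) (ZMod.isPrimitive_stdAddChar p)
    rw [prod_eq_zero (mem_univ j) (by rw [hlinear, norm_zero]), mul_zero]
    positivity
  · simp_rw [AddChar.norm_sum_quadratic hchar (ZMod.isPrimitive_stdAddChar p) (neg_ne_zero.2 hξd),
      ZMod.card, prod_const, card_univ, Fintype.card_fin]
    have hsqrt : √(p : ℝ) ^ d ≠ 0 := by have := hp.pos; positivity
    have hpow : (p : ℝ) ^ d = (√(p : ℝ) ^ d) ^ 2 := by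
      rw [← pow_mul, mul_comm, pow_mul, Real.sq_sqrt (Nat.cast_nonneg p)]
    rw [hpow, sq, mul_inv, inv_mul_cancel_right₀ hsqrt]

/-- **Lemma (Gauss sum bound).**
Let `d ≥ 1` and let `p` be an odd prime.  For every nonzero
`ξ = (ξ', ξ_{d+1}) ∈ (ℤ/pℤ)^d × (ℤ/pℤ)`,
`p^{-d} |∑_{n ∈ [0,p-1]^d} e^{-2πi (n·ξ' + |n|² ξ_{d+1})/p}| ≤ p^{-d/2}`,
where `|n|² = ∑ᵢ nᵢ²` and `n·ξ' = ∑ᵢ nᵢ ξ'ᵢ`, computed with representatives in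
`{0,…,p-1}`. -/
theorem gauss_sum_power_bound (d p : ℕ) (hd : 1 ≤ d) (hp : p.Prime) (hodd : Odd p)
    (ξ' : Fin d → ZMod p) (ξd : ZMod p) (hξ : ¬(ξ' = 0 ∧ ξd = 0)) :
    ((p : ℝ) ^ d)⁻¹ *
        ‖∑ n ∈ Fintype.piFinset (fun _ : Fin d => Finset.range p),
            Complex.exp (-2 * Real.pi * Complex.I *
              ((((∑ i, n i * ((ξ' i).val)) + (∑ i, (n i) ^ 2) * ξd.val : ℕ)) : ℂ) / (p : ℂ))‖
      ≤ ((Real.sqrt p) ^ d)⁻¹ :=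
  gauss_sum_power_bound_general d p hp hodd ξ' ξd hξ
end
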